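/- arXiv:0910.5714 — 4 statements merged into one kernel-verified Lean document; each statement's English description precedes it below -/
import Mathlib

section
/- For all integers c ≥ 0 and i ≥ 0, the number of tiles of the bounded-bisection-auction tiling T_{c,i} equals 2^c · (2^i·(c+2) − 1). -/
open Finset

/-- The value space `{0,…,2^k−1} × {0,…,2^k−1}`. -/
def Vk (k : ℕ) : Finset (ℕ × ℕ) := Finset.range (2 ^ k) ×ˢ Finset.range (2 ^ k)

/-- A tiling of `Vk k`: a finite collection of nonempty rectangles partitioning `Vk k`. -/
def IsTiling (k : ℕ) (T : Finset (Finset (ℕ × ℕ))) : Prop :=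
  (∀ R ∈ T, ∃ S S' : Finset ℕ, R = S ×ˢ S') ∧
    (∀ R ∈ T, R.Nonempty) ∧ (∀ R ∈ T, R ⊆ Vk k) ∧ ∀ x ∈ Vk k, ∃! R, R ∈ T ∧ x ∈ R

/-- `f`-monochromaticity of a tiling. -/
def Mono {β : Type} (f : ℕ × ℕ → β) (T : Finset (Finset (ℕ × ℕ))) : Prop :=
  ∀ R ∈ T, ∀ x ∈ R, ∀ y ∈ R, f x = f y

/-- The tile of `T` containing `x` (union of all tiles containing `x`; for a
tiling this is exactly the unique tile containing `x`). -/
def tileOf (T : Finset (Finset (ℕ × ℕ))) (x : ℕ × ℕ) : Finset (ℕ × ℕ) :=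
  (T.filter fun R => x ∈ R).sup id

/-- The ideal region of `x`: the level set of `f x` inside `Vk k`. -/
def ideal {β : Type} [DecidableEq β] (k : ℕ) (f : ℕ × ℕ → β) (x : ℕ × ℕ) : Finset (ℕ × ℕ) :=
  (Vk k).filter fun y => f y = f x

/-- Average-case objective PAR of a tiling w.r.t. the uniform distribution. -/
def avgObjPAR {β : Type} [DecidableEq β] (k : ℕ) (f : ℕ × ℕ → β)
    (T : Finset (Finset (ℕ × ℕ))) : ℚ :=
  (∑ x ∈ Vk k, ((ideal k f x).card : ℚ) / ((tileOf T x).card : ℚ)) / 2 ^ (2 * k)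

/-- Average-case PAR with respect to party 1. -/
def avgPAR1 {β : Type} [DecidableEq β] (k : ℕ) (f : ℕ × ℕ → β)
    (T : Finset (Finset (ℕ × ℕ))) : ℚ :=
  (∑ x ∈ Vk k,
      (((Finset.range (2 ^ k)).filter fun y => f (x.1, y) = f x).card : ℚ) /
        (((Finset.range (2 ^ k)).filter fun y => (x.1, y) ∈ tileOf T x).card : ℚ)) /
    2 ^ (2 * k)

/-- Average-case PAR with respect to party 2. -/
def avgPAR2 {β : Type} [DecidableEq β] (k : ℕ) (f : ℕ × ℕ → β)
    (T : Finset (Finset (ℕ × ℕ))) : ℚ :=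
  (∑ x ∈ Vk k,
      (((Finset.range (2 ^ k)).filter fun y => f (y, x.2) = f x).card : ℚ) /
        (((Finset.range (2 ^ k)).filter fun y => (y, x.2) ∈ tileOf T x).card : ℚ)) /
    2 ^ (2 * k)

/-- The millionaires function: `1` if `x1 ≥ x2`, else `2`. -/
def Mil (x : ℕ × ℕ) : ℕ := if x.2 ≤ x.1 then 1 else 2

/-- The second-price auction function. -/
def Auc (x : ℕ × ℕ) : ℕ × ℕ := if x.2 ≤ x.1 then (1, x.2) else (2, x.1)

/-- Translate a tile by `(a, a)`. -/
def shiftTile (a : ℕ) (R : Finset (ℕ × ℕ)) : Finset (ℕ × ℕ) :=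
  R.image fun p => (p.1 + a, p.2 + a)

/-- The bisection-protocol tiling `B_k`. -/
def Btile : ℕ → Finset (Finset (ℕ × ℕ))
  | 0 => {{(0, 0)}}
  | j + 1 =>
    Btile j ∪ (Btile j).image (shiftTile (2 ^ j)) ∪
      {Finset.range (2 ^ j) ×ˢ Finset.Ico (2 ^ j) (2 ^ (j + 1)),
        Finset.Ico (2 ^ j) (2 ^ (j + 1)) ×ˢ Finset.range (2 ^ j)}

/-- The bounded-bisection-auction tiling `T_{c,i}`. -/
def BBA : ℕ → ℕ → Finset (Finset (ℕ × ℕ))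
  | 0, i =>
    (Finset.range (2 ^ i)).image (fun p => Finset.Ico p (2 ^ i) ×ˢ ({p} : Finset ℕ)) ∪
      (Finset.range (2 ^ i - 1)).image fun p => ({p} : Finset ℕ) ×ˢ Finset.Ico (p + 1) (2 ^ i)
  | c + 1, i =>
    BBA c i ∪ (BBA c i).image (shiftTile (2 ^ (c + i))) ∪
      (Finset.range (2 ^ (c + i))).image
        (fun j => Finset.Ico (2 ^ (c + i)) (2 ^ (c + i + 1)) ×ˢ ({j} : Finset ℕ)) ∪
      (Finset.range (2 ^ (c + i))).image fun j =>
        ({j} : Finset ℕ) ×ˢ Finset.Ico (2 ^ (c + i)) (2 ^ (c + i + 1))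

/-- The public-good function: `true` iff `x1 + x2 ≥ 2^k − 1` ("Build"). -/
def PG (k : ℕ) (x : ℕ × ℕ) : Bool := decide (2 ^ k - 1 ≤ x.1 + x.2)

/-- The truthful public-good function: `none` = "Do Not Build". -/
def TPG (c : ℕ) (x : ℕ × ℕ) : Option (ℕ × ℕ) :=
  if x.1 + x.2 < c then none else some (c - x.2, c - x.1)

/-- The tiling of `Vk k` into singleton cells (sealed-bid auction). -/
def sealedTiling (k : ℕ) : Finset (Finset (ℕ × ℕ)) :=
  (Vk k).image fun x => ({x} : Finset (ℕ × ℕ))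

lemma bba_bound (c i : ℕ) : ∀ R ∈ BBA c i, R.Nonempty ∧
    ∀ p ∈ R, p.1 < 2 ^ (c + i) ∧ p.2 < 2 ^ (c + i) := by
  induction c with
  | zero =>
    intro R hR
    simp only [BBA, mem_union, mem_image, mem_range] at hR
    rcases hR with ⟨p, hp, rfl⟩ | ⟨p, hp, rfl⟩
    · constructor
      · exact ⟨(p, p), by simp [mem_product, mem_Ico]; omega⟩
      · intro q hq
        simp only [mem_product, mem_Ico, mem_singleton] at hq
        simp only [Nat.zero_add]; omega
    · constructor
      · exact ⟨(p, p + 1), by simp [mem_product, mem_Ico]; omega⟩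
      · intro q hq
        simp only [mem_product, mem_Ico, mem_singleton] at hq
        simp only [Nat.zero_add]; omega
  | succ c IH =>
    intro R hR
    have hlt : 2 ^ (c + i) < 2 ^ (c + 1 + i) := by
      apply Nat.pow_lt_pow_right (by norm_num); omega
    simp only [BBA, mem_union, mem_image, mem_range] at hR
    rcases hR with ((hR | ⟨R', hR', rfl⟩) | ⟨j, hj, rfl⟩) | ⟨j, hj, rfl⟩
    · obtain ⟨hne, hb⟩ := IH R hR
      exact ⟨hne, fun p hp => ⟨lt_trans (hb p hp).1 hlt, lt_trans (hb p hp).2 hlt⟩⟩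
    · obtain ⟨hne, hb⟩ := IH R' hR'
      constructor
      · exact hne.image _
      · intro p hp
        simp only [shiftTile, mem_image] at hp
        obtain ⟨q, hq, rfl⟩ := hp
        have := hb q hq
        have h2 : 2 ^ (c + 1 + i) = 2 * 2 ^ (c + i) := by
          rw [show c + 1 + i = (c + i) + 1 by omega, pow_succ]; ring
        omega
    · constructor
      · exact ⟨(2 ^ (c + i), j), by simp [mem_product, mem_Ico]; omega⟩
      · intro q hq
        simp only [mem_product, mem_Ico, mem_singleton] at hq
        have h2 : 2 ^ (c + 1 + i) = 2 ^ (c + i + 1) := by rw [show c + 1 + i = c + i + 1 by omega]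
        omega
    · constructor
      · exact ⟨(j, 2 ^ (c + i)), by simp [mem_product, mem_Ico]; omega⟩
      · intro q hq
        simp only [mem_product, mem_Ico, mem_singleton] at hq
        have h2 : 2 ^ (c + 1 + i) = 2 ^ (c + i + 1) := by rw [show c + 1 + i = c + i + 1 by omega]
        omega


/-- the number of tiles of the bounded-bisection-auction tiling
`T_{c,i}` equals `2^c · (2^i·(c+2) − 1)`. -/
theorem stmt10 (c i : ℕ) : (BBA c i).card = 2 ^ c * (2 ^ i * (c + 2) - 1) := by
  induction c with
  | zero =>
    have h1 : 1 ≤ (2:ℕ) ^ i := Nat.one_le_two_pow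
    rw [BBA]
    rw [card_union_of_disjoint]
    · rw [card_image_of_injOn, card_image_of_injOn, card_range, card_range]
      · simp; omega
      · intro p hp q hq h
        simp only [mem_coe, mem_range] at hp hq
        replace h : ({p} : Finset ℕ) ×ˢ Finset.Ico (p + 1) (2 ^ i) = ({q} : Finset ℕ) ×ˢ Finset.Ico (q + 1) (2 ^ i) := h
        have : (p, p + 1) ∈ ({q} : Finset ℕ) ×ˢ Finset.Ico (q + 1) (2 ^ i) := by
          rw [← h]; simp [mem_product, mem_Ico]; omega
        simp [mem_product] at this; omega
      · intro p hp q hq h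
        simp only [mem_coe, mem_range] at hp hq
        replace h : Finset.Ico p (2 ^ i) ×ˢ ({p} : Finset ℕ) = Finset.Ico q (2 ^ i) ×ˢ ({q} : Finset ℕ) := h
        have : (p, p) ∈ Finset.Ico q (2 ^ i) ×ˢ ({q} : Finset ℕ) := by
          rw [← h]; simp [mem_product, mem_Ico]; omega
        simp [mem_product] at this; omega
    · rw [disjoint_left]
      intro R hR hR'
      simp only [mem_image, mem_range] at hR hR'
      obtain ⟨p, hp, rfl⟩ := hR
      obtain ⟨q, hq, hEq⟩ := hR'
      have : (p, p) ∈ ({q} : Finset ℕ) ×ˢ Finset.Ico (q + 1) (2 ^ i) := by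
        rw [hEq]; simp [mem_product, mem_Ico]; omega
      simp [mem_product, mem_Ico] at this; omega
  | succ c IH =>
    have key := bba_bound c i
    set n := c + i with hn
    -- characterizations of membership for the four families
    have hA : ∀ R ∈ BBA c i, R.Nonempty ∧ ∀ p ∈ R, p.1 < 2 ^ n ∧ p.2 < 2 ^ n := key
    have hB : ∀ R ∈ (BBA c i).image (shiftTile (2 ^ n)), R.Nonempty ∧
        ∀ p ∈ R, 2 ^ n ≤ p.1 ∧ 2 ^ n ≤ p.2 := by
      intro R hR
      simp only [mem_image] at hR
      obtain ⟨R', hR', rfl⟩ := hR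
      obtain ⟨hne, _⟩ := hA R' hR'
      refine ⟨hne.image _, ?_⟩
      intro p hp
      simp only [shiftTile, mem_image] at hp
      obtain ⟨q, _, rfl⟩ := hp
      omega
    have hC : ∀ R ∈ (Finset.range (2 ^ n)).image
        (fun j => Finset.Ico (2 ^ n) (2 ^ (n + 1)) ×ˢ ({j} : Finset ℕ)), R.Nonempty ∧
        ∀ p ∈ R, 2 ^ n ≤ p.1 ∧ p.2 < 2 ^ n := by
      intro R hR
      simp only [mem_image, mem_range] at hR
      obtain ⟨j, hj, rfl⟩ := hR
      constructor
      · exact ⟨(2 ^ n, j), by simp [mem_product, mem_Ico]; omega⟩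
      · intro p hp; simp only [mem_product, mem_Ico, mem_singleton] at hp; omega
    have hD : ∀ R ∈ (Finset.range (2 ^ n)).image
        (fun j => ({j} : Finset ℕ) ×ˢ Finset.Ico (2 ^ n) (2 ^ (n + 1))), R.Nonempty ∧
        ∀ p ∈ R, p.1 < 2 ^ n ∧ 2 ^ n ≤ p.2 := by
      intro R hR
      simp only [mem_image, mem_range] at hR
      obtain ⟨j, hj, rfl⟩ := hR
      constructor
      · exact ⟨(j, 2 ^ n), by simp [mem_product, mem_Ico]; omega⟩
      · intro p hp; simp only [mem_product, mem_Ico, mem_singleton] at hp; omega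
    have disjAB : Disjoint (BBA c i) ((BBA c i).image (shiftTile (2 ^ n))) := by
      rw [disjoint_left]; intro R h1 h2
      obtain ⟨⟨p, hp⟩, hb⟩ := hA R h1
      have := (hB R h2).2 p hp
      have := hb p hp
      omega
    have disjABC : Disjoint (BBA c i ∪ (BBA c i).image (shiftTile (2 ^ n)))
        ((Finset.range (2 ^ n)).image
          (fun j => Finset.Ico (2 ^ n) (2 ^ (n + 1)) ×ˢ ({j} : Finset ℕ))) := by
      rw [disjoint_left]; intro R h1 h2
      obtain ⟨⟨p, hp⟩, hc⟩ := hC R h2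
      rcases mem_union.mp h1 with h1 | h1
      · have := (hA R h1).2 p hp; have := hc p hp; omega
      · have := (hB R h1).2 p hp; have := hc p hp; omega
    have disjABCD : Disjoint ((BBA c i ∪ (BBA c i).image (shiftTile (2 ^ n))) ∪
        (Finset.range (2 ^ n)).image
          (fun j => Finset.Ico (2 ^ n) (2 ^ (n + 1)) ×ˢ ({j} : Finset ℕ)))
        ((Finset.range (2 ^ n)).image
          (fun j => ({j} : Finset ℕ) ×ˢ Finset.Ico (2 ^ n) (2 ^ (n + 1)))) := by
      rw [disjoint_left]; intro R h1 h2
      obtain ⟨⟨p, hp⟩, hd⟩ := hD R h2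
      rcases mem_union.mp h1 with h1 | h1
      · rcases mem_union.mp h1 with h1 | h1
        · have := (hA R h1).2 p hp; have := hd p hp; omega
        · have := (hB R h1).2 p hp; have := hd p hp; omega
      · have := (hC R h1).2 p hp; have := hd p hp; omega
    have cardB : ((BBA c i).image (shiftTile (2 ^ n))).card = (BBA c i).card := by
      apply card_image_of_injective
      apply Finset.image_injective
      intro p q h
      simp only [Prod.mk.injEq] at h
      ext <;> omega
    have cardC : ((Finset.range (2 ^ n)).image
        (fun j => Finset.Ico (2 ^ n) (2 ^ (n + 1)) ×ˢ ({j} : Finset ℕ))).card = 2 ^ n := by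
      rw [card_image_of_injOn, card_range]
      intro p hp q hq h
      have hlt : 2 ^ n < 2 ^ (n + 1) := by
        apply Nat.pow_lt_pow_right (by norm_num); omega
      replace h : Finset.Ico (2 ^ n) (2 ^ (n + 1)) ×ˢ ({p} : Finset ℕ) = Finset.Ico (2 ^ n) (2 ^ (n + 1)) ×ˢ ({q} : Finset ℕ) := h
      have : (2 ^ n, p) ∈ Finset.Ico (2 ^ n) (2 ^ (n + 1)) ×ˢ ({q} : Finset ℕ) := by
        rw [← h]; simp [mem_product, mem_Ico]; omega
      simp [mem_product] at this; omega
    have cardD : ((Finset.range (2 ^ n)).image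
        (fun j => ({j} : Finset ℕ) ×ˢ Finset.Ico (2 ^ n) (2 ^ (n + 1)))).card = 2 ^ n := by
      rw [card_image_of_injOn, card_range]
      intro p hp q hq h
      have hlt : 2 ^ n < 2 ^ (n + 1) := by
        apply Nat.pow_lt_pow_right (by norm_num); omega
      replace h : ({p} : Finset ℕ) ×ˢ Finset.Ico (2 ^ n) (2 ^ (n + 1)) = ({q} : Finset ℕ) ×ˢ Finset.Ico (2 ^ n) (2 ^ (n + 1)) := h
      have : (p, 2 ^ n) ∈ ({q} : Finset ℕ) ×ˢ Finset.Ico (2 ^ n) (2 ^ (n + 1)) := by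
        rw [← h]; simp [mem_product, mem_Ico]; omega
      simp [mem_product] at this; omega
    rw [BBA, card_union_of_disjoint disjABCD, card_union_of_disjoint disjABC,
      card_union_of_disjoint disjAB, cardB, cardC, cardD, IH]
    have h1 : 1 ≤ (2:ℕ) ^ i := Nat.one_le_two_pow
    have hni : 2 ^ n = 2 ^ c * 2 ^ i := by rw [hn, pow_add]
    have h2 : 1 ≤ 2 ^ i * (c + 2) := by nlinarith
    have h3 : 1 ≤ 2 ^ i * (c + 1 + 2) := by nlinarith
    rw [hni]
    rw [pow_succ]
    zify [h2, h3]
    ring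
end

section
/- For all integers c ≥ 0 and i ≥ 0, setting k = c + i, one has Σ_{R ∈ T_{c,i}} (2^k − |R^I(R)|) = 2^{k−1} · ((1+2^c)·(2^i−1) + 2^k·c), where for a tile R of T_{c,i}, R^I(R) denotes the level set {x ∈ {0,…,2^k−1}² : A_k(x) = v_R} of the common value v_R taken by A_k on R. -/
open Finset

/-!
On a tile where the auction outcome is `(1, p)` the level set of the outcome is the row segment
`[p, 2^k) × {p}`, and where it is `(2, p)` it is the column segment `{p} × (p, 2^k)`; so the
summand of a tile is the price `p`, resp. `p + 1`, paid at any of its points. `T_{c+1,i}`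
consists of `T_{c,i}`, a copy of `T_{c,i}` shifted by `n = 2^{c+i}` (which raises every price by
`n`), `n` row tiles of prices `0, …, n - 1` and `n` column tiles of prices `1, …, n`. Hence the sum
`S_c` of the prices obeys `S_{c+1} = 2 S_c + n |T_{c,i}| + n²`, while
`|T_{c+1,i}| = 2 |T_{c,i}| + 2n`, and both recursions are solved in closed form.
-/

def price (x : ℕ × ℕ) : ℕ := if x.2 ≤ x.1 then x.2 else x.1 + 1

lemma price_add (x : ℕ × ℕ) (a : ℕ) : price (x.1 + a, x.2 + a) = price x + a := by
  simp only [price]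
  split_ifs <;> omega

lemma card_filter_Auc_eq_add_price {k : ℕ} {x : ℕ × ℕ} (hx : x ∈ Vk k) :
    ((Vk k).filter fun y => Auc y = Auc x).card + price x = 2 ^ k := by
  simp only [Vk, mem_product, mem_range] at hx
  rcases le_or_gt x.2 x.1 with h | h
  · have hlevel : ((Vk k).filter fun y => Auc y = Auc x) = Ico x.2 (2 ^ k) ×ˢ {x.2} := by
      ext y
      simp only [Vk, Auc, mem_filter, mem_product, mem_range, mem_Ico, mem_singleton, if_pos h]
      split_ifs <;>
        simp only [Prod.ext_iff, OfNat.ofNat_ne_one, true_and, false_and,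
          and_false, false_iff, not_and] <;> omega
    rw [hlevel, card_product, card_singleton, Nat.card_Ico, price, if_pos h]
    omega
  · have hlevel : ((Vk k).filter fun y => Auc y = Auc x) = {x.1} ×ˢ Ico (x.1 + 1) (2 ^ k) := by
      ext y
      simp only [Vk, Auc, mem_filter, mem_product, mem_range, mem_Ico, mem_singleton,
        if_neg h.not_ge]
      split_ifs <;>
        simp only [Prod.ext_iff, OfNat.one_ne_ofNat, true_and, false_and,
          and_false, false_iff, not_and] <;> omega
    rw [hlevel, card_product, card_singleton, Nat.card_Ico, price, if_neg h.not_ge]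
    omega

lemma two_pow_sub_card_filter_Auc_eq {k : ℕ} {x : ℕ × ℕ} (hx : x ∈ Vk k) :
    2 ^ k - ((Vk k).filter fun y => Auc y = Auc x).card = price x := by
  have := card_filter_Auc_eq_add_price hx
  omega

lemma mem_shiftTile {a : ℕ} {R : Finset (ℕ × ℕ)} {z : ℕ × ℕ} :
    z ∈ shiftTile a R ↔ ∃ x ∈ R, (x.1 + a, x.2 + a) = z :=
  mem_image

lemma le_of_mem_shiftTile {a : ℕ} {R : Finset (ℕ × ℕ)} {z : ℕ × ℕ} (hz : z ∈ shiftTile a R) :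
    a ≤ z.1 ∧ a ≤ z.2 := by
  obtain ⟨x, -, rfl⟩ := mem_shiftTile.1 hz
  exact ⟨Nat.le_add_left a x.1, Nat.le_add_left a x.2⟩

lemma shiftTile_injective (a : ℕ) : Function.Injective (shiftTile a) :=
  image_injective fun x y h => by
    simp only [Prod.ext_iff, Nat.add_right_cancel_iff] at h
    exact Prod.ext h.1 h.2

lemma mem_BBA_succ {c i : ℕ} {R : Finset (ℕ × ℕ)} :
    R ∈ BBA (c + 1) i ↔ R ∈ BBA c i ∨ (∃ S ∈ BBA c i, shiftTile (2 ^ (c + i)) S = R) ∨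
      (∃ j < 2 ^ (c + i), Ico (2 ^ (c + i)) (2 ^ (c + i + 1)) ×ˢ {j} = R) ∨
      ∃ j < 2 ^ (c + i), {j} ×ˢ Ico (2 ^ (c + i)) (2 ^ (c + i + 1)) = R := by
  simp only [BBA, mem_union, mem_image, mem_range, or_assoc]

lemma nonempty_and_subset_Vk_of_mem_BBA {c i : ℕ} {R : Finset (ℕ × ℕ)} (hR : R ∈ BBA c i) :
    R.Nonempty ∧ R ⊆ Vk (c + i) := by
  induction c generalizing R with
  | zero =>
    simp only [BBA, mem_union, mem_image, mem_range] at hR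
    rw [zero_add]
    rcases hR with ⟨p, hp, rfl⟩ | ⟨p, hp, rfl⟩
    · refine ⟨⟨(p, p), by simp [hp]⟩, fun x hx => ?_⟩
      simp only [Vk, mem_product, mem_Ico, mem_singleton, mem_range] at hx ⊢
      omega
    · refine ⟨⟨(p, p + 1), ?_⟩, fun x hx => ?_⟩
      · simp only [singleton_product, mem_map_mk, mem_Ico, le_refl, true_and]
        omega
      simp only [Vk, mem_product, mem_Ico, mem_singleton, mem_range] at hx ⊢
      omega
  | succ c ih =>
    have hpow : 2 ^ (c + i + 1) = 2 ^ (c + i) + 2 ^ (c + i) := by rw [pow_succ, mul_two]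
    rw [Nat.add_right_comm c 1 i]
    rcases mem_BBA_succ.1 hR with hR | ⟨S, hS, rfl⟩ | ⟨j, hj, rfl⟩ | ⟨j, hj, rfl⟩
    · refine ⟨(ih hR).1, (ih hR).2.trans fun x hx => ?_⟩
      simp only [Vk, mem_product, mem_range] at hx ⊢
      omega
    · obtain ⟨hS, hSV⟩ := ih hS
      refine ⟨hS.image _, fun x hx => ?_⟩
      obtain ⟨y, hy, rfl⟩ := mem_shiftTile.1 hx
      have := hSV hy
      simp only [Vk, mem_product, mem_range] at this ⊢
      omega
    · refine ⟨⟨(2 ^ (c + i), j), by simp [hpow]⟩, fun x hx => ?_⟩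
      simp only [Vk, mem_product, mem_Ico, mem_singleton, mem_range] at hx ⊢
      omega
    · refine ⟨⟨(j, 2 ^ (c + i)), by simp [hpow]⟩, fun x hx => ?_⟩
      simp only [Vk, mem_product, mem_Ico, mem_singleton, mem_range] at hx ⊢
      omega

lemma disjoint_of_forall_mem_eq {α β : Type*} {A B : Finset (Finset α)} (q : α → β) {a b : β}
    (hab : a ≠ b) (hA : ∀ R ∈ A, R.Nonempty ∧ ∀ x ∈ R, q x = a)
    (hB : ∀ R ∈ B, ∀ x ∈ R, q x = b) : Disjoint A B := by
  refine disjoint_left.2 fun R hRA hRB => ?_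
  obtain ⟨⟨x, hx⟩, hqa⟩ := hA R hRA
  exact hab ((hqa x hx).symm.trans (hB R hRB x hx))

section Decomposition

variable {M : Type*} [AddCommMonoid M] (f : Finset (ℕ × ℕ) → M)

lemma sum_BBA_zero (i : ℕ) :
    ∑ R ∈ BBA 0 i, f R =
      ∑ p ∈ range (2 ^ i), f (Ico p (2 ^ i) ×ˢ {p}) +
        ∑ p ∈ range (2 ^ i - 1), f ({p} ×ˢ Ico (p + 1) (2 ^ i)) := by
  let q : ℕ × ℕ → Bool := fun x => decide (x.2 ≤ x.1)
  have hrows : ∀ R ∈ (range (2 ^ i)).image fun p => Ico p (2 ^ i) ×ˢ {p},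
      R.Nonempty ∧ ∀ x ∈ R, q x = true := by
    simp only [mem_image, mem_range]
    rintro _ ⟨p, hp, rfl⟩
    refine ⟨⟨(p, p), by simp [hp]⟩, fun x hx => ?_⟩
    simp only [mem_product, mem_singleton, mem_Ico] at hx
    simp only [q, decide_eq_true_eq]
    omega
  have hcols : ∀ R ∈ (range (2 ^ i - 1)).image fun p => {p} ×ˢ Ico (p + 1) (2 ^ i),
      ∀ x ∈ R, q x = false := by
    simp only [mem_image, mem_range]
    rintro _ ⟨p, hp, rfl⟩ x hx
    simp only [mem_product, mem_singleton, mem_Ico] at hx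
    simp only [q, decide_eq_false_iff_not]
    omega
  rw [BBA, sum_union (disjoint_of_forall_mem_eq q (by decide) hrows hcols), sum_image, sum_image]
  · intro p hp p' _ h
    rw [coe_range, Set.mem_Iio] at hp
    have := (Finset.ext_iff.1 h (p, p + 1)).1
      (by simp only [singleton_product, mem_map_mk, mem_Ico, le_refl, true_and]; omega)
    simp only [mem_product, mem_singleton, mem_Ico] at this
    exact this.1
  · intro p hp p' _ h
    have := (Finset.ext_iff.1 h (p, p)).1 (by simpa using hp)
    simp only [mem_product, mem_singleton, mem_Ico] at this
    exact this.2

lemma sum_BBA_succ (c i : ℕ) :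
    ∑ R ∈ BBA (c + 1) i, f R =
      ∑ R ∈ BBA c i, f R + ∑ R ∈ BBA c i, f (shiftTile (2 ^ (c + i)) R) +
        ∑ j ∈ range (2 ^ (c + i)), f (Ico (2 ^ (c + i)) (2 ^ (c + i + 1)) ×ˢ {j}) +
        ∑ j ∈ range (2 ^ (c + i)), f ({j} ×ˢ Ico (2 ^ (c + i)) (2 ^ (c + i + 1))) := by
  set n := 2 ^ (c + i)
  have hn : n < 2 ^ (c + i + 1) := Nat.pow_lt_pow_succ one_lt_two
  -- the four families lie in the four quadrants of `Vk (c + i + 1)`, told apart by `q`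
  let q : ℕ × ℕ → Bool × Bool := fun x => (decide (n ≤ x.1), decide (n ≤ x.2))
  have hA : ∀ R ∈ BBA c i, R.Nonempty ∧ ∀ x ∈ R, q x = (false, false) := by
    intro R hR
    obtain ⟨hne, hsub⟩ := nonempty_and_subset_Vk_of_mem_BBA hR
    exact ⟨hne, fun x hx => by simpa [q, n, Vk] using hsub hx⟩
  have hB : ∀ R ∈ (BBA c i).image (shiftTile n), R.Nonempty ∧ ∀ x ∈ R, q x = (true, true) := by
    simp only [mem_image]
    rintro _ ⟨S, hS, rfl⟩
    refine ⟨(hA S hS).1.image _, fun x hx => ?_⟩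
    simp [q, le_of_mem_shiftTile hx]
  have hC : ∀ R ∈ (range n).image fun j => Ico n (2 ^ (c + i + 1)) ×ˢ {j},
      R.Nonempty ∧ ∀ x ∈ R, q x = (true, false) := by
    simp only [mem_image, mem_range]
    rintro _ ⟨j, hj, rfl⟩
    refine ⟨⟨(n, j), by simp [hn]⟩, fun x hx => ?_⟩
    simp only [mem_product, mem_Ico, mem_singleton] at hx
    simp [q, hx.1.1, hx.2, hj]
  have hD : ∀ R ∈ (range n).image fun j => {j} ×ˢ Ico n (2 ^ (c + i + 1)),
      ∀ x ∈ R, q x = (false, true) := by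
    simp only [mem_image, mem_range]
    rintro _ ⟨j, hj, rfl⟩ x hx
    simp only [mem_product, mem_Ico, mem_singleton] at hx
    simp [q, hx.1, hx.2.1, hj]
  rw [BBA, sum_union, sum_union, sum_union, sum_image, sum_image, sum_image]
  · intro j _ j' _ h
    exact (by simpa [n, hn] using (Finset.ext_iff.1 h (j, n)).1 : j' = j).symm
  · intro j _ j' _ h
    exact (by simpa [n, hn] using (Finset.ext_iff.1 h (n, j)).1 : j' = j).symm
  · exact (shiftTile_injective n).injOn
  · exact disjoint_of_forall_mem_eq q (by decide) hA fun R hR => (hB R hR).2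
  · exact disjoint_union_left.2
      ⟨disjoint_of_forall_mem_eq q (by decide) hA fun R hR => (hC R hR).2,
        disjoint_of_forall_mem_eq q (by decide) hB fun R hR => (hC R hR).2⟩
  · exact disjoint_union_left.2
      ⟨disjoint_union_left.2 ⟨disjoint_of_forall_mem_eq q (by decide) hA hD,
        disjoint_of_forall_mem_eq q (by decide) hB hD⟩,
        disjoint_of_forall_mem_eq q (by decide) hC hD⟩

end Decomposition

lemma card_BBA_add (c i : ℕ) : (BBA c i).card + 2 ^ c = 2 ^ (c + i + 1) + c * 2 ^ (c + i) := by
  induction c with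
  | zero =>
    rw [card_eq_sum_ones, sum_BBA_zero]
    simp only [sum_const, card_range, smul_eq_mul, mul_one, pow_zero, zero_add, zero_mul,
      add_zero, pow_succ]
    have := @Nat.one_le_two_pow i
    omega
  | succ c ih =>
    rw [card_eq_sum_ones, sum_BBA_succ, ← card_eq_sum_ones, Nat.add_right_comm c 1 i]
    simp only [sum_const, card_range, smul_eq_mul, mul_one, pow_succ] at ih ⊢
    linarith

section Prices

variable {g : Finset (ℕ × ℕ) → ℕ}

lemma sum_BBA_zero_eq_of_price (i : ℕ) (hg : ∀ R ∈ BBA 0 i, ∀ x ∈ R, g R = price x) :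
    ∑ R ∈ BBA 0 i, g R = 2 ^ i * (2 ^ i - 1) := by
  have hrow : ∀ p ∈ range (2 ^ i), g (Ico p (2 ^ i) ×ˢ {p}) = p := fun p hp => by
    rw [hg _ (by rw [BBA]; exact mem_union_left _ (mem_image_of_mem _ hp)) (p, p)
      (by simpa using hp), price, if_pos le_rfl]
  have hcol : ∀ p ∈ range (2 ^ i - 1), g ({p} ×ˢ Ico (p + 1) (2 ^ i)) = p + 1 := fun p hp => by
    have hp' := mem_range.1 hp
    rw [hg _ (by rw [BBA]; exact mem_union_right _ (mem_image_of_mem _ hp)) (p, p + 1)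
      (by simp only [singleton_product, mem_map_mk, mem_Ico, le_refl, true_and]; omega), price,
      if_neg (by omega)]
  have hshift : ∑ p ∈ range (2 ^ i - 1), (p + 1) = ∑ p ∈ range (2 ^ i), p := by
    conv_rhs => rw [← Nat.sub_add_cancel (@Nat.one_le_two_pow i), sum_range_succ', add_zero]
  rw [sum_BBA_zero, sum_congr rfl hrow, sum_congr rfl hcol, hshift, ← mul_two,
    sum_range_id_mul_two]

lemma price_shiftTile_of_mem_BBA {c i : ℕ} (hg : ∀ R ∈ BBA (c + 1) i, ∀ x ∈ R, g R = price x)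
    {R : Finset (ℕ × ℕ)} (hR : R ∈ BBA c i) {x : ℕ × ℕ} (hx : x ∈ R) :
    g (shiftTile (2 ^ (c + i)) R) = price x + 2 ^ (c + i) := by
  rw [← price_add,
    hg _ (mem_BBA_succ.2 (.inr (.inl ⟨R, hR, rfl⟩))) _ (mem_shiftTile.2 ⟨x, hx, rfl⟩)]

lemma sum_BBA_succ_eq_of_price (c i : ℕ) (hg : ∀ R ∈ BBA (c + 1) i, ∀ x ∈ R, g R = price x) :
    ∑ R ∈ BBA (c + 1) i, g R = ∑ R ∈ BBA c i, g R +
      ∑ R ∈ BBA c i, (g (shiftTile (2 ^ (c + i)) R) - 2 ^ (c + i)) +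
      (BBA c i).card * 2 ^ (c + i) + 2 ^ (c + i) * 2 ^ (c + i) := by
  set n := 2 ^ (c + i)
  have hn : n < 2 ^ (c + i + 1) := Nat.pow_lt_pow_succ one_lt_two
  have hrow : ∀ j ∈ range n, g (Ico n (2 ^ (c + i + 1)) ×ˢ {j}) = j := fun j hj => by
    rw [mem_range] at hj
    rw [hg _ (mem_BBA_succ.2 (.inr (.inr (.inl ⟨j, hj, rfl⟩)))) (n, j) (by simp [n, hn]), price,
      if_pos hj.le]
  have hcol : ∀ j ∈ range n, g ({j} ×ˢ Ico n (2 ^ (c + i + 1))) = j + 1 := fun j hj => by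
    rw [mem_range] at hj
    rw [hg _ (mem_BBA_succ.2 (.inr (.inr (.inr ⟨j, hj, rfl⟩)))) (j, n) (by simp [n, hn]), price,
      if_neg hj.not_ge]
  have hshifted : ∑ R ∈ BBA c i, g (shiftTile n R) =
      ∑ R ∈ BBA c i, (g (shiftTile n R) - n) + (BBA c i).card * n := by
    rw [card_eq_sum_ones, sum_mul, one_mul, ← sum_add_distrib]
    refine sum_congr rfl fun R hR => ?_
    obtain ⟨x, hx⟩ := (nonempty_and_subset_Vk_of_mem_BBA hR).1
    rw [price_shiftTile_of_mem_BBA hg hR hx, Nat.add_sub_cancel]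
  have hsquare : ∑ j ∈ range n, j + ∑ j ∈ range n, (j + 1) = n * n := by
    have hgauss := sum_range_id_mul_two n
    have : n * (n - 1) + n = n * n := by
      rw [Nat.mul_sub_one, Nat.sub_add_cancel (Nat.le_mul_self n)]
    rw [sum_add_distrib, sum_const, card_range, smul_eq_mul, mul_one]
    omega
  rw [sum_BBA_succ, sum_congr rfl hrow, sum_congr rfl hcol, hshifted, add_assoc _ (∑ j ∈ _, j),
    hsquare, add_assoc _ _ (n * n)]
  ring

lemma two_mul_sum_BBA_eq_of_price (c i : ℕ) (hg : ∀ R ∈ BBA c i, ∀ x ∈ R, g R = price x) :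
    2 * ∑ R ∈ BBA c i, g R = 2 ^ (c + i) * ((1 + 2 ^ c) * (2 ^ i - 1) + 2 ^ (c + i) * c) := by
  induction c generalizing g with
  | zero =>
    rw [sum_BBA_zero_eq_of_price i hg]
    ring
  | succ c ih =>
    have hA := ih fun R hR => hg R (mem_BBA_succ.2 (.inl hR))
    have hB := @ih (fun R => g (shiftTile (2 ^ (c + i)) R) - 2 ^ (c + i)) fun R hR x hx => by
      simp only [price_shiftTile_of_mem_BBA hg hR hx, Nat.add_sub_cancel]
    have hcard := card_BBA_add c i
    rw [sum_BBA_succ_eq_of_price c i hg, Nat.add_right_comm c 1 i, pow_succ' 2 (c + i),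
      pow_succ' 2 c]
    rw [pow_succ' 2 (c + i)] at hcard
    zify [@Nat.one_le_two_pow i] at hA hB hcard ⊢
    linear_combination hA + hB + 2 * 2 ^ (c + i) * hcard

lemma sum_BBA_eq_of_price (c i : ℕ) (hg : ∀ R ∈ BBA c i, ∀ x ∈ R, g R = price x) :
    ∑ R ∈ BBA c i, g R = 2 ^ (c + i - 1) * ((1 + 2 ^ c) * (2 ^ i - 1) + 2 ^ (c + i) * c) := by
  have h := two_mul_sum_BBA_eq_of_price c i hg
  rcases Nat.eq_zero_or_pos (c + i) with hk | hk
  · obtain ⟨rfl, rfl⟩ : c = 0 ∧ i = 0 := by omega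
    simpa using h
  · apply Nat.eq_of_mul_eq_mul_left two_pos
    rw [h, ← mul_assoc, ← pow_succ', Nat.sub_add_cancel hk]

end Prices

/-- with `k = c + i`,
`Σ_{R ∈ T_{c,i}} (2^k − |R^I(R)|) = 2^{k−1}·((1+2^c)·(2^i−1) + 2^k·c)`, where
`R^I(R)` is the level set of the common value `v R` taken by `A_k` on `R`. -/
theorem stmt11 (c i : ℕ) (v : Finset (ℕ × ℕ) → ℕ × ℕ)
    (hv : ∀ R ∈ BBA c i, ∀ x ∈ R, Auc x = v R) :
    ∑ R ∈ BBA c i, (2 ^ (c + i) - ((Vk (c + i)).filter fun y => Auc y = v R).card) =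
      2 ^ (c + i - 1) * ((1 + 2 ^ c) * (2 ^ i - 1) + 2 ^ (c + i) * c) := by
  refine sum_BBA_eq_of_price c i fun R hR x hx => ?_
  rw [← hv R hR x hx,
    two_pow_sub_card_filter_Auc_eq ((nonempty_and_subset_Vk_of_mem_BBA hR).2 hx)]
end

section
/- For every k ≥ 1, the average-case objective PAR of the bisection-auction tiling T_{k,0} for the function A_k equals k/2 + 1. -/
open Finset

namespace Stmt12

/-- Explicit tile containing `x` in `BBA k 0`. -/
def tile : ℕ → ℕ × ℕ → Finset (ℕ × ℕ)
  | 0, _ => {(0, 0)}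
  | k + 1, x =>
    if x.1 < 2 ^ k then
      if x.2 < 2 ^ k then tile k x
      else ({x.1} : Finset ℕ) ×ˢ Finset.Ico (2 ^ k) (2 ^ (k + 1))
    else
      if x.2 < 2 ^ k then Finset.Ico (2 ^ k) (2 ^ (k + 1)) ×ˢ ({x.2} : Finset ℕ)
      else shiftTile (2 ^ k) (tile k (x.1 - 2 ^ k, x.2 - 2 ^ k))

lemma tile_succ (k : ℕ) (x : ℕ × ℕ) : tile (k + 1) x =
    if x.1 < 2 ^ k then
      if x.2 < 2 ^ k then tile k x
      else ({x.1} : Finset ℕ) ×ˢ Finset.Ico (2 ^ k) (2 ^ (k + 1))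
    else
      if x.2 < 2 ^ k then Finset.Ico (2 ^ k) (2 ^ (k + 1)) ×ˢ ({x.2} : Finset ℕ)
      else shiftTile (2 ^ k) (tile k (x.1 - 2 ^ k, x.2 - 2 ^ k)) := rfl

lemma mem_Vk {k : ℕ} {x : ℕ × ℕ} : x ∈ Vk k ↔ x.1 < 2 ^ k ∧ x.2 < 2 ^ k := by
  simp [Vk]

lemma mem_shiftTile {a : ℕ} {R : Finset (ℕ × ℕ)} {y : ℕ × ℕ} :
    y ∈ shiftTile a R ↔ ∃ p ∈ R, p.1 + a = y.1 ∧ p.2 + a = y.2 := by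
  simp [shiftTile, Prod.ext_iff]

lemma shiftTile_card (a : ℕ) (R : Finset (ℕ × ℕ)) : (shiftTile a R).card = R.card := by
  apply Finset.card_image_of_injective
  intro p q h
  simp only [Prod.mk.injEq] at h
  exact Prod.ext (by omega) (by omega)

lemma BBA_subset : ∀ (c : ℕ), ∀ R ∈ BBA c 0, R ⊆ Vk c := by
  intro c
  induction c with
  | zero =>
    intro R hR
    simp only [BBA, Finset.mem_union, Finset.mem_image, Finset.mem_range] at hR
    rcases hR with ⟨p, hp, rfl⟩ | ⟨p, hp, rfl⟩ <;>
    · intro y hy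
      simp only [Finset.mem_product, Finset.mem_Ico, Finset.mem_singleton] at hy
      rw [mem_Vk]
      omega
  | succ k ih =>
    intro R hR
    simp only [BBA, Nat.add_zero, Finset.mem_union, Finset.mem_image, Finset.mem_range] at hR
    have h2 : (2:ℕ) ^ (k + 1) = 2 ^ k + 2 ^ k := by rw [pow_succ]; ring
    rcases hR with ((hR | ⟨R', hR', rfl⟩) | ⟨j, hj, rfl⟩) | ⟨j, hj, rfl⟩
    · intro y hy
      have := ih R hR hy
      rw [mem_Vk] at this ⊢
      omega
    · intro y hy
      rw [mem_shiftTile] at hy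
      obtain ⟨p, hp, h1, h2'⟩ := hy
      have := ih R' hR' hp
      rw [mem_Vk] at this ⊢
      omega
    · intro y hy
      simp only [Finset.mem_product, Finset.mem_Ico, Finset.mem_singleton] at hy
      rw [mem_Vk]
      omega
    · intro y hy
      simp only [Finset.mem_product, Finset.mem_Ico, Finset.mem_singleton] at hy
      rw [mem_Vk]
      omega

end Stmt12
namespace Stmt12

lemma pow_succ_eq (k : ℕ) : (2:ℕ) ^ (k + 1) = 2 ^ k + 2 ^ k := by rw [pow_succ]; ring

lemma mem_tile : ∀ (k : ℕ) (x : ℕ × ℕ), x ∈ Vk k → x ∈ tile k x := by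
  intro k
  induction k with
  | zero =>
    intro x hx
    rw [mem_Vk] at hx
    simp only [pow_zero] at hx
    have : x = (0, 0) := Prod.ext (by omega) (by omega)
    rw [this, tile]
    simp
  | succ k ih =>
    intro x hx
    rw [mem_Vk] at hx
    have h2 := pow_succ_eq k
    rw [tile_succ]
    split_ifs with h1 hb hb
    · exact ih x (mem_Vk.mpr ⟨h1, hb⟩)
    · simp only [Finset.mem_product, Finset.mem_singleton, Finset.mem_Ico, true_and, and_true]
      omega
    · simp only [Finset.mem_product, Finset.mem_singleton, Finset.mem_Ico, true_and, and_true]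
      omega
    · rw [mem_shiftTile]
      refine ⟨(x.1 - 2 ^ k, x.2 - 2 ^ k), ih _ (mem_Vk.mpr ⟨by omega, by omega⟩), by omega, by omega⟩

lemma tile_mem_BBA : ∀ (k : ℕ) (x : ℕ × ℕ), x ∈ Vk k → tile k x ∈ BBA k 0 := by
  intro k
  induction k with
  | zero =>
    intro x hx
    rw [tile]
    simp only [BBA, Finset.mem_union, Finset.mem_image, Finset.mem_range]
    left
    exact ⟨0, by norm_num, by decide⟩
  | succ k ih =>
    intro x hx
    rw [mem_Vk] at hx
    have h2 := pow_succ_eq k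
    rw [tile_succ]
    simp only [BBA, Nat.add_zero, Finset.mem_union, Finset.mem_image, Finset.mem_range]
    split_ifs with h1 hb hb
    · exact Or.inl (Or.inl (Or.inl (ih x (mem_Vk.mpr ⟨h1, hb⟩))))
    · exact Or.inr ⟨x.1, h1, rfl⟩
    · exact Or.inl (Or.inr ⟨x.2, hb, rfl⟩)
    · exact Or.inl (Or.inl (Or.inr ⟨tile k (x.1 - 2 ^ k, x.2 - 2 ^ k),
        ih _ (mem_Vk.mpr ⟨by omega, by omega⟩), rfl⟩))

lemma tile_unique : ∀ (k : ℕ) (x : ℕ × ℕ), x ∈ Vk k → ∀ R ∈ BBA k 0, x ∈ R → R = tile k x := by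
  intro k
  induction k with
  | zero =>
    intro x hx R hR hxR
    simp only [BBA, Finset.mem_union, Finset.mem_image, Finset.mem_range] at hR
    rw [tile]
    rcases hR with ⟨p, hp, rfl⟩ | ⟨p, hp, rfl⟩
    · interval_cases p
      decide
    · omega
  | succ k ih =>
    intro x hx R hR hxR
    rw [mem_Vk] at hx
    have h2 := pow_succ_eq k
    simp only [BBA, Nat.add_zero, Finset.mem_union, Finset.mem_image, Finset.mem_range] at hR
    rw [tile_succ]
    rcases hR with ((hR | ⟨R', hR', rfl⟩) | ⟨j, hj, rfl⟩) | ⟨j, hj, rfl⟩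
    · have hsub := BBA_subset k R hR hxR
      rw [mem_Vk] at hsub
      rw [if_pos hsub.1, if_pos hsub.2]
      exact ih x (mem_Vk.mpr hsub) R hR hxR
    · rw [mem_shiftTile] at hxR
      obtain ⟨p, hp, hp1, hp2⟩ := hxR
      have hpV := BBA_subset k R' hR' hp
      rw [mem_Vk] at hpV
      rw [if_neg (by omega), if_neg (by omega)]
      have hpeq : p = (x.1 - 2 ^ k, x.2 - 2 ^ k) := Prod.ext (by omega) (by omega)
      rw [ih (x.1 - 2 ^ k, x.2 - 2 ^ k) (mem_Vk.mpr ⟨by omega, by omega⟩) R' hR' (hpeq ▸ hp)]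
    · simp only [Finset.mem_product, Finset.mem_Ico, Finset.mem_singleton] at hxR
      rw [if_neg (by omega), if_pos (by omega)]
      rw [hxR.2]
    · simp only [Finset.mem_product, Finset.mem_Ico, Finset.mem_singleton] at hxR
      rw [if_pos (by omega)]
      rw [if_neg (by omega), hxR.1]

lemma tileOf_eq (k : ℕ) (x : ℕ × ℕ) (hx : x ∈ Vk k) : tileOf (BBA k 0) x = tile k x := by
  have h : (BBA k 0).filter (fun R => x ∈ R) = {tile k x} := by
    ext R
    simp only [Finset.mem_filter, Finset.mem_singleton]
    constructor
    · rintro ⟨hR, hxR⟩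
      exact tile_unique k x hx R hR hxR
    · rintro rfl
      exact ⟨tile_mem_BBA k x hx, mem_tile k x hx⟩
  rw [tileOf, h, Finset.sup_singleton]
  rfl

end Stmt12
namespace Stmt12

lemma ideal_card_le {k x1 x2 : ℕ} (h : x2 ≤ x1) (h1 : x1 < 2 ^ k) :
    (ideal k Auc (x1, x2)).card = 2 ^ k - x2 := by
  have heq : ideal k Auc (x1, x2) = Finset.Ico x2 (2 ^ k) ×ˢ ({x2} : Finset ℕ) := by
    ext ⟨y1, y2⟩
    simp only [ideal, Auc, Finset.mem_filter, Finset.mem_product, Finset.mem_Ico,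
      Finset.mem_singleton, mem_Vk]
    rw [if_pos h]
    split_ifs with hy <;> · simp only [Prod.mk.injEq, true_and, and_true]; omega
  rw [heq, Finset.card_product, Finset.card_singleton, Nat.card_Ico, mul_one]

lemma ideal_card_lt {k x1 x2 : ℕ} (h : x1 < x2) (h2 : x2 < 2 ^ k) :
    (ideal k Auc (x1, x2)).card = 2 ^ k - (x1 + 1) := by
  have heq : ideal k Auc (x1, x2) = ({x1} : Finset ℕ) ×ˢ Finset.Ico (x1 + 1) (2 ^ k) := by
    ext ⟨y1, y2⟩
    simp only [ideal, Auc, Finset.mem_filter, Finset.mem_product, Finset.mem_Ico,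
      Finset.mem_singleton, mem_Vk]
    rw [if_neg (show ¬(x2 ≤ x1) by omega)]
    split_ifs with hy <;> · simp only [Prod.mk.injEq, true_and, and_true]; omega
  rw [heq, Finset.card_product, Finset.card_singleton, Nat.card_Ico, one_mul]

/-- The summand of the PAR sum with the explicit tile. -/
def termS (k : ℕ) (x : ℕ × ℕ) : ℚ := ((ideal k Auc x).card : ℚ) / ((tile k x).card : ℚ)

def Sq (k : ℕ) : ℚ := ∑ x ∈ Vk k, termS k x

def Hq (k : ℕ) : ℚ := ∑ x ∈ Vk k, 1 / ((tile k x).card : ℚ)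

lemma sum_range_split (k : ℕ) (h : ℕ → ℚ) :
    ∑ a ∈ Finset.range (2 ^ (k + 1)), h a =
      ∑ a ∈ Finset.range (2 ^ k), h a + ∑ a ∈ Finset.range (2 ^ k), h (2 ^ k + a) := by
  rw [pow_succ_eq, Finset.range_eq_Ico,
    ← Finset.sum_Ico_consecutive h (Nat.zero_le (2 ^ k)) (Nat.le_add_right _ _),
    ← Finset.range_eq_Ico, Finset.sum_Ico_eq_sum_range, Nat.add_sub_cancel]

lemma sum_Vk_succ (k : ℕ) (g : ℕ × ℕ → ℚ) :
    ∑ x ∈ Vk (k + 1), g x =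
      ((∑ a ∈ Finset.range (2 ^ k), ∑ b ∈ Finset.range (2 ^ k), g (a, b)) +
       (∑ a ∈ Finset.range (2 ^ k), ∑ b ∈ Finset.range (2 ^ k), g (a, 2 ^ k + b))) +
      ((∑ a ∈ Finset.range (2 ^ k), ∑ b ∈ Finset.range (2 ^ k), g (2 ^ k + a, b)) +
       (∑ a ∈ Finset.range (2 ^ k), ∑ b ∈ Finset.range (2 ^ k), g (2 ^ k + a, 2 ^ k + b))) := by
  rw [Vk, Finset.sum_product, sum_range_split k (fun a => ∑ b ∈ Finset.range (2 ^ (k + 1)), g (a, b))]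
  congr 1
  · rw [← Finset.sum_add_distrib]
    exact Finset.sum_congr rfl fun a _ => sum_range_split k (fun b => g (a, b))
  · rw [← Finset.sum_add_distrib]
    exact Finset.sum_congr rfl fun a _ => sum_range_split k (fun b => g (2 ^ k + a, b))

lemma gauss (n : ℕ) : ∑ a ∈ Finset.range n, (a : ℚ) = n * (n - 1) / 2 := by
  induction n with
  | zero => simp
  | succ m ih =>
    rw [Finset.sum_range_succ, ih]
    push_cast
    ring

end Stmt12
namespace Stmt12

lemma tileLL {k a b : ℕ} (ha : a < 2 ^ k) (hb : b < 2 ^ k) :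
    tile (k + 1) (a, b) = tile k (a, b) := by
  rw [tile_succ]
  simp [ha, hb]

lemma tileUL {k a b : ℕ} (ha : a < 2 ^ k) :
    tile (k + 1) (a, 2 ^ k + b) = ({a} : Finset ℕ) ×ˢ Finset.Ico (2 ^ k) (2 ^ (k + 1)) := by
  rw [tile_succ]
  simp only [Prod.fst, Prod.snd]
  rw [if_pos (show (a, 2 ^ k + b).1 < 2 ^ k from ha),
    if_neg (show ¬((a, 2 ^ k + b).2 < 2 ^ k) by simp)]

lemma tileLR {k a b : ℕ} (hb : b < 2 ^ k) :
    tile (k + 1) (2 ^ k + a, b) = Finset.Ico (2 ^ k) (2 ^ (k + 1)) ×ˢ ({b} : Finset ℕ) := by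
  rw [tile_succ]
  rw [if_neg (show ¬((2 ^ k + a, b).1 < 2 ^ k) by simp), if_pos (show (2 ^ k + a, b).2 < 2 ^ k from hb)]

lemma tileUR_card {k a b : ℕ} :
    (tile (k + 1) (2 ^ k + a, 2 ^ k + b)).card = (tile k (a, b)).card := by
  rw [tile_succ]
  rw [if_neg (show ¬((2 ^ k + a, 2 ^ k + b).1 < 2 ^ k) by simp),
    if_neg (show ¬((2 ^ k + a, 2 ^ k + b).2 < 2 ^ k) by simp)]
  simp only [Nat.add_sub_cancel_left]
  rw [shiftTile_card]

lemma midtile_card (k : ℕ) (a : ℕ) :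
    (({a} : Finset ℕ) ×ˢ Finset.Ico (2 ^ k) (2 ^ (k + 1))).card = 2 ^ k ∧
    (Finset.Ico (2 ^ k) (2 ^ (k + 1)) ×ˢ ({a} : Finset ℕ)).card = 2 ^ k := by
  constructor
  · rw [Finset.card_product, Finset.card_singleton, Nat.card_Ico, pow_succ_eq,
      Nat.add_sub_cancel, one_mul]
  · rw [Finset.card_product, Finset.card_singleton, Nat.card_Ico, pow_succ_eq,
      Nat.add_sub_cancel, mul_one]

lemma idealLL {k a b : ℕ} (ha : a < 2 ^ k) (hb : b < 2 ^ k) :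
    (ideal (k + 1) Auc (a, b)).card = (ideal k Auc (a, b)).card + 2 ^ k := by
  have h2 := pow_succ_eq k
  rcases le_or_gt b a with h | h
  · rw [ideal_card_le h (by omega), ideal_card_le h ha]
    omega
  · rw [ideal_card_lt h (by omega), ideal_card_lt h hb]
    omega

lemma idealUL {k a b : ℕ} (ha : a < 2 ^ k) (hb : b < 2 ^ k) :
    (ideal (k + 1) Auc (a, 2 ^ k + b)).card = 2 ^ (k + 1) - (a + 1) := by
  have h2 := pow_succ_eq k
  rw [ideal_card_lt (show a < 2 ^ k + b by omega) (show 2 ^ k + b < 2 ^ (k + 1) by omega)]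

lemma idealLR {k a b : ℕ} (ha : a < 2 ^ k) (hb : b < 2 ^ k) :
    (ideal (k + 1) Auc (2 ^ k + a, b)).card = 2 ^ (k + 1) - b := by
  have h2 := pow_succ_eq k
  rw [ideal_card_le (show b ≤ 2 ^ k + a by omega) (show 2 ^ k + a < 2 ^ (k + 1) by omega)]

lemma idealUR {k a b : ℕ} (ha : a < 2 ^ k) (hb : b < 2 ^ k) :
    (ideal (k + 1) Auc (2 ^ k + a, 2 ^ k + b)).card = (ideal k Auc (a, b)).card := by
  have h2 := pow_succ_eq k
  rcases le_or_gt b a with h | h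
  · rw [ideal_card_le (show 2 ^ k + b ≤ 2 ^ k + a by omega)
      (show 2 ^ k + a < 2 ^ (k + 1) by omega), ideal_card_le h ha]
    omega
  · rw [ideal_card_lt (show 2 ^ k + a < 2 ^ k + b by omega)
      (show 2 ^ k + b < 2 ^ (k + 1) by omega), ideal_card_lt h hb]
    omega

end Stmt12
namespace Stmt12

lemma Hq_succ (k : ℕ) : Hq (k + 1) = 2 * Hq k + 2 ^ (k + 1) := by
  have e1 : ∑ a ∈ Finset.range (2 ^ k), ∑ b ∈ Finset.range (2 ^ k),
      (1 : ℚ) / ((tile (k + 1) (a, b)).card : ℚ) = Hq k := by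
    rw [Hq, Vk, Finset.sum_product]
    refine Finset.sum_congr rfl fun a ha => Finset.sum_congr rfl fun b hb => ?_
    rw [tileLL (Finset.mem_range.mp ha) (Finset.mem_range.mp hb)]
  have e4 : ∑ a ∈ Finset.range (2 ^ k), ∑ b ∈ Finset.range (2 ^ k),
      (1 : ℚ) / ((tile (k + 1) (2 ^ k + a, 2 ^ k + b)).card : ℚ) = Hq k := by
    rw [Hq, Vk, Finset.sum_product]
    refine Finset.sum_congr rfl fun a ha => Finset.sum_congr rfl fun b hb => ?_
    rw [tileUR_card]
  have e2 : ∑ a ∈ Finset.range (2 ^ k), ∑ b ∈ Finset.range (2 ^ k),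
      (1 : ℚ) / ((tile (k + 1) (a, 2 ^ k + b)).card : ℚ) = 2 ^ k := by
    have step : ∀ a ∈ Finset.range (2 ^ k), ∀ b ∈ Finset.range (2 ^ k),
        (1 : ℚ) / ((tile (k + 1) (a, 2 ^ k + b)).card : ℚ) = 1 / 2 ^ k := by
      intro a ha b hb
      rw [tileUL (Finset.mem_range.mp ha), (midtile_card k a).1]
      push_cast
      ring
    rw [Finset.sum_congr rfl fun a ha => Finset.sum_congr rfl fun b hb => step a ha b hb]
    rw [Finset.sum_const, Finset.card_range, Finset.sum_const, Finset.card_range,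
      nsmul_eq_mul, nsmul_eq_mul]
    push_cast
    field_simp
  have e3 : ∑ a ∈ Finset.range (2 ^ k), ∑ b ∈ Finset.range (2 ^ k),
      (1 : ℚ) / ((tile (k + 1) (2 ^ k + a, b)).card : ℚ) = 2 ^ k := by
    have step : ∀ a ∈ Finset.range (2 ^ k), ∀ b ∈ Finset.range (2 ^ k),
        (1 : ℚ) / ((tile (k + 1) (2 ^ k + a, b)).card : ℚ) = 1 / 2 ^ k := by
      intro a ha b hb
      rw [tileLR (Finset.mem_range.mp hb), (midtile_card k b).2]
      push_cast
      ring
    rw [Finset.sum_congr rfl fun a ha => Finset.sum_congr rfl fun b hb => step a ha b hb]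
    rw [Finset.sum_const, Finset.card_range, Finset.sum_const, Finset.card_range,
      nsmul_eq_mul, nsmul_eq_mul]
    push_cast
    field_simp
  rw [Hq, sum_Vk_succ k (fun x => (1 : ℚ) / ((tile (k + 1) x).card : ℚ))]
  simp only [e1, e2, e3, e4]
  ring

end Stmt12
namespace Stmt12

lemma Sq_succ (k : ℕ) : Sq (k + 1) = 2 * Sq k + 2 ^ k * Hq k + 3 * 4 ^ k := by
  have h4 : (4 : ℚ) ^ k = 2 ^ k * 2 ^ k := by
    rw [show (4 : ℚ) = 2 * 2 by norm_num, mul_pow]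
  have hpow := pow_succ_eq k
  have e1 : ∑ a ∈ Finset.range (2 ^ k), ∑ b ∈ Finset.range (2 ^ k),
      termS (k + 1) (a, b) = Sq k + 2 ^ k * Hq k := by
    have step : ∀ a ∈ Finset.range (2 ^ k), ∀ b ∈ Finset.range (2 ^ k),
        termS (k + 1) (a, b) = termS k (a, b) + 2 ^ k * (1 / ((tile k (a, b)).card : ℚ)) := by
      intro a ha b hb
      have ha' := Finset.mem_range.mp ha
      have hb' := Finset.mem_range.mp hb
      rw [termS, termS, idealLL ha' hb', tileLL ha' hb']
      push_cast
      rw [add_div, mul_one_div]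
    rw [Finset.sum_congr rfl fun a ha => Finset.sum_congr rfl fun b hb => step a ha b hb]
    rw [Sq, Hq, Vk, Finset.sum_product, Finset.sum_product]
    simp only [Finset.sum_add_distrib, Finset.mul_sum]
  have e4 : ∑ a ∈ Finset.range (2 ^ k), ∑ b ∈ Finset.range (2 ^ k),
      termS (k + 1) (2 ^ k + a, 2 ^ k + b) = Sq k := by
    rw [Sq, Vk, Finset.sum_product]
    refine Finset.sum_congr rfl fun a ha => Finset.sum_congr rfl fun b hb => ?_
    rw [termS, termS, idealUR (Finset.mem_range.mp ha) (Finset.mem_range.mp hb), tileUR_card]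
  have e2 : ∑ a ∈ Finset.range (2 ^ k), ∑ b ∈ Finset.range (2 ^ k),
      termS (k + 1) (a, 2 ^ k + b) = 3 * 4 ^ k / 2 - 2 ^ k / 2 := by
    have step : ∀ a ∈ Finset.range (2 ^ k), ∀ b ∈ Finset.range (2 ^ k),
        termS (k + 1) (a, 2 ^ k + b) = ((2 : ℚ) ^ (k + 1) - (a + 1)) / 2 ^ k := by
      intro a ha b hb
      have ha' := Finset.mem_range.mp ha
      have hb' := Finset.mem_range.mp hb
      rw [termS, idealUL ha' hb', tileUL ha', (midtile_card k a).1,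
        Nat.cast_sub (show a + 1 ≤ 2 ^ (k + 1) by omega)]
      push_cast
      ring
    rw [Finset.sum_congr rfl fun a ha => Finset.sum_congr rfl fun b hb => step a ha b hb]
    have inner : ∀ a ∈ Finset.range (2 ^ k),
        ∑ _b ∈ Finset.range (2 ^ k), ((2 : ℚ) ^ (k + 1) - (a + 1)) / 2 ^ k
          = (2 : ℚ) ^ (k + 1) - (a + 1) := by
      intro a ha
      rw [Finset.sum_const, Finset.card_range, nsmul_eq_mul]
      push_cast
      field_simp
    rw [Finset.sum_congr rfl inner]
    simp only [Finset.sum_sub_distrib, Finset.sum_add_distrib, gauss, Finset.sum_const,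
      Finset.card_range, nsmul_eq_mul, mul_one]
    push_cast
    rw [h4]
    ring
  have e3 : ∑ a ∈ Finset.range (2 ^ k), ∑ b ∈ Finset.range (2 ^ k),
      termS (k + 1) (2 ^ k + a, b) = 3 * 4 ^ k / 2 + 2 ^ k / 2 := by
    have step : ∀ a ∈ Finset.range (2 ^ k), ∀ b ∈ Finset.range (2 ^ k),
        termS (k + 1) (2 ^ k + a, b) = ((2 : ℚ) ^ (k + 1) - b) / 2 ^ k := by
      intro a ha b hb
      have ha' := Finset.mem_range.mp ha
      have hb' := Finset.mem_range.mp hb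
      rw [termS, idealLR ha' hb', tileLR hb', (midtile_card k b).2,
        Nat.cast_sub (show b ≤ 2 ^ (k + 1) by omega)]
      push_cast
      ring
    rw [Finset.sum_congr rfl fun a ha => Finset.sum_congr rfl fun b hb => step a ha b hb]
    have inner : ∑ b ∈ Finset.range (2 ^ k), ((2 : ℚ) ^ (k + 1) - b) / 2 ^ k
          = (3 * 4 ^ k / 2 + 2 ^ k / 2) / 2 ^ k := by
      rw [← Finset.sum_div]
      congr 1
      simp only [Finset.sum_sub_distrib, gauss, Finset.sum_const, Finset.card_range,
        nsmul_eq_mul, mul_one]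
      push_cast
      rw [h4]
      ring
    rw [Finset.sum_congr rfl fun a _ => inner, Finset.sum_const, Finset.card_range, nsmul_eq_mul]
    push_cast
    field_simp
  rw [Sq, sum_Vk_succ k (termS (k + 1))]
  rw [e1, e2, e3, e4]
  ring

lemma Hq_zero : Hq 0 = 1 := by
  rw [Hq, show Vk 0 = {((0 : ℕ), (0 : ℕ))} by decide, Finset.sum_singleton,
    show tile 0 (0, 0) = {((0 : ℕ), (0 : ℕ))} from rfl]
  norm_num

lemma Sq_zero : Sq 0 = 1 := by
  rw [Sq, show Vk 0 = {((0 : ℕ), (0 : ℕ))} by decide, Finset.sum_singleton, termS]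
  have h1 : (ideal 0 Auc (0, 0)).card = 1 := by
    rw [ideal_card_le le_rfl (by norm_num)]
    norm_num
  rw [h1, show tile 0 (0, 0) = {((0 : ℕ), (0 : ℕ))} from rfl]
  norm_num

lemma Hq_eq (k : ℕ) : Hq k = ((k : ℚ) + 1) * 2 ^ k := by
  induction k with
  | zero => rw [Hq_zero]; norm_num
  | succ m ih =>
    rw [Hq_succ, ih]
    push_cast
    ring

lemma Sq_eq (k : ℕ) : Sq k = ((k : ℚ) + 2) / 2 * 4 ^ k := by
  induction k with
  | zero => rw [Sq_zero]; norm_num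
  | succ m ih =>
    have h4 : (4 : ℚ) ^ m = 2 ^ m * 2 ^ m := by
      rw [show (4 : ℚ) = 2 * 2 by norm_num, mul_pow]
    rw [Sq_succ, ih, Hq_eq, show (4 : ℚ) ^ (m + 1) = 2 ^ m * 2 ^ m * 4 by rw [pow_succ, h4]]
    push_cast
    rw [h4]
    ring

end Stmt12
/-- for `k ≥ 1`, the average-case objective PAR of the
bisection-auction tiling `T_{k,0}` for `A_k` equals `k/2 + 1`. -/
theorem stmt12 (k : ℕ) (hk : 1 ≤ k) :
    avgObjPAR k Auc (BBA k 0) = (k : ℚ) / 2 + 1 := by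
  have hs : ∑ x ∈ Vk k, ((ideal k Auc x).card : ℚ) / ((tileOf (BBA k 0) x).card : ℚ)
      = Stmt12.Sq k := by
    refine Finset.sum_congr rfl fun x hx => ?_
    rw [Stmt12.tileOf_eq k x hx]
    rfl
  rw [avgObjPAR, hs, Stmt12.Sq_eq]
  rw [show (2 : ℚ) ^ (2 * k) = 4 ^ k by rw [pow_mul]; norm_num]
  have h4 : (4 : ℚ) ^ k ≠ 0 := by positivity
  field_simp
end

section
/- For all integers c ≥ 0 and i ≥ 0, setting k = c + i, the average-case PAR with respect to party 1 of the bounded-bisection-auction tiling T_{c,i} for the function A_k equals (c+5)/4 + (2−c)/2^{k+2} − 1/2^{i+1} − 1/2^{c+2}. -/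
open Finset

lemma mem_Vk {k : ℕ} {x : ℕ × ℕ} : x ∈ Vk k ↔ x.1 < 2 ^ k ∧ x.2 < 2 ^ k := by
  simp [Vk]

lemma shiftTile_prod (a : ℕ) (S T : Finset ℕ) :
    shiftTile a (S ×ˢ T) = (S.image (· + a)) ×ˢ (T.image (· + a)) := by
  ext p
  simp only [shiftTile, Finset.mem_image, Finset.mem_product]
  constructor
  · rintro ⟨q, ⟨hq1, hq2⟩, rfl⟩
    exact ⟨⟨q.1, hq1, rfl⟩, ⟨q.2, hq2, rfl⟩⟩
  · rintro ⟨⟨s, hs, h1⟩, ⟨t, ht, h2⟩⟩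
    exact ⟨(s, t), ⟨hs, ht⟩, by simp [h1, h2]⟩

def tileP : ℕ → ℕ → ℕ × ℕ → Finset ℕ × Finset ℕ
  | 0, i, x =>
    if x.2 ≤ x.1 then (Finset.Ico x.2 (2 ^ i), {x.2})
    else ({x.1}, Finset.Ico (x.1 + 1) (2 ^ i))
  | c + 1, i, x =>
    if x.1 < 2 ^ (c + i) then
      if x.2 < 2 ^ (c + i) then tileP c i x
      else ({x.1}, Finset.Ico (2 ^ (c + i)) (2 ^ (c + i + 1)))
    else
      if x.2 < 2 ^ (c + i) then (Finset.Ico (2 ^ (c + i)) (2 ^ (c + i + 1)), {x.2})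
      else (((tileP c i (x.1 - 2 ^ (c + i), x.2 - 2 ^ (c + i))).1.image (· + 2 ^ (c + i))),
            ((tileP c i (x.1 - 2 ^ (c + i), x.2 - 2 ^ (c + i))).2.image (· + 2 ^ (c + i))))

lemma BBA_subset {c i : ℕ} : ∀ R ∈ BBA c i, R ⊆ Vk (c + i) := by
  induction c with
  | zero =>
    intro R hR
    simp only [BBA, mem_union, mem_image, mem_range] at hR
    rcases hR with ⟨p, hp, rfl⟩ | ⟨p, hp, rfl⟩ <;>
      · intro y hy
        simp only [mem_product, mem_Ico, mem_singleton] at hy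
        rw [mem_Vk]
        simp only [Nat.zero_add]
        omega
  | succ c ih =>
    intro R hR
    rw [show c + 1 + i = c + i + 1 from by omega]
    have h2 : (2:ℕ) ^ (c + i + 1) = 2 ^ (c + i) + 2 ^ (c + i) := by ring
    simp only [BBA, mem_union, mem_image, mem_range] at hR
    rcases hR with ((hR | ⟨R', hR', rfl⟩) | ⟨j, hj, rfl⟩) | ⟨j, hj, rfl⟩
    · intro y hy
      have := ih R hR hy
      rw [mem_Vk] at this ⊢
      omega
    · intro y hy
      simp only [shiftTile, mem_image] at hy
      obtain ⟨q, hq, rfl⟩ := hy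
      have := ih R' hR' hq
      rw [mem_Vk] at this ⊢
      simp only []
      omega
    · intro y hy
      simp only [mem_product, mem_Ico, mem_singleton, mem_range] at hy
      rw [mem_Vk]; omega
    · intro y hy
      simp only [mem_product, mem_Ico, mem_singleton, mem_range] at hy
      rw [mem_Vk]; omega

lemma tileP_self {c i : ℕ} {x : ℕ × ℕ} (hx : x ∈ Vk (c + i)) :
    x.1 ∈ (tileP c i x).1 ∧ x.2 ∈ (tileP c i x).2 := by
  induction c generalizing x with
  | zero =>
    rw [mem_Vk] at hx
    simp only [Nat.zero_add] at hx
    by_cases h : x.2 ≤ x.1 <;>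
      simp only [tileP, h, ite_true, ite_false, mem_Ico, mem_singleton, true_and, and_true] <;>
      omega
  | succ c ih =>
    rw [show c + 1 + i = c + i + 1 from by omega, mem_Vk] at hx
    have h2 : (2:ℕ) ^ (c + i + 1) = 2 ^ (c + i) + 2 ^ (c + i) := by ring
    by_cases h1 : x.1 < 2 ^ (c + i) <;> by_cases hq : x.2 < 2 ^ (c + i)
    · simpa only [tileP, h1, hq, ite_true] using ih (mem_Vk.2 ⟨h1, hq⟩)
    · simp only [tileP, h1, hq, ite_true, ite_false, mem_singleton, mem_Ico, true_and, and_true]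
      omega
    · simp only [tileP, h1, hq, ite_true, ite_false, mem_singleton, mem_Ico, true_and, and_true]
      omega
    · have hx' : (x.1 - 2 ^ (c + i), x.2 - 2 ^ (c + i)) ∈ Vk (c + i) := by
        rw [mem_Vk]; constructor <;> simp <;> omega
      obtain ⟨ha, hb⟩ := ih hx'
      simp only [tileP, h1, hq, ite_true, ite_false, mem_image]
      exact ⟨⟨_, ha, by simp; omega⟩, ⟨_, hb, by simp; omega⟩⟩

lemma tileP_mem_BBA {c i : ℕ} {x : ℕ × ℕ} (hx : x ∈ Vk (c + i)) :
    (tileP c i x).1 ×ˢ (tileP c i x).2 ∈ BBA c i := by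
  induction c generalizing x with
  | zero =>
    rw [mem_Vk] at hx
    simp only [Nat.zero_add] at hx
    by_cases h : x.2 ≤ x.1
    · simp only [tileP, h, ite_true, BBA, mem_union, mem_image, mem_range]
      exact Or.inl ⟨x.2, by omega, rfl⟩
    · simp only [tileP, h, ite_false, BBA, mem_union, mem_image, mem_range]
      exact Or.inr ⟨x.1, by omega, rfl⟩
  | succ c ih =>
    rw [show c + 1 + i = c + i + 1 from by omega, mem_Vk] at hx
    have h2 : (2:ℕ) ^ (c + i + 1) = 2 ^ (c + i) + 2 ^ (c + i) := by ring
    by_cases h1 : x.1 < 2 ^ (c + i) <;> by_cases hq : x.2 < 2 ^ (c + i)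
    · simp only [tileP, h1, hq, ite_true, BBA, mem_union]
      exact Or.inl (Or.inl (Or.inl (ih (mem_Vk.2 ⟨h1, hq⟩))))
    · simp only [tileP, h1, hq, ite_true, ite_false, BBA, mem_union, mem_image, mem_range]
      exact Or.inr ⟨x.1, h1, rfl⟩
    · simp only [tileP, h1, hq, ite_true, ite_false, BBA, mem_union, mem_image, mem_range]
      exact Or.inl (Or.inr ⟨x.2, hq, rfl⟩)
    · have hx' : (x.1 - 2 ^ (c + i), x.2 - 2 ^ (c + i)) ∈ Vk (c + i) := by
        rw [mem_Vk]; constructor <;> simp <;> omega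
      simp only [tileP, h1, hq, ite_true, ite_false, BBA, mem_union, mem_image, mem_range]
      refine Or.inl (Or.inl (Or.inr ⟨_, ih hx', ?_⟩))
      rw [shiftTile_prod]

lemma BBA_eq_tileP {c i : ℕ} {R : Finset (ℕ × ℕ)} (hR : R ∈ BBA c i) {x : ℕ × ℕ}
    (hx : x ∈ R) : R = (tileP c i x).1 ×ˢ (tileP c i x).2 := by
  induction c generalizing x R with
  | zero =>
    simp only [BBA, mem_union, mem_image, mem_range] at hR
    rcases hR with ⟨p, hp, rfl⟩ | ⟨p, hp, rfl⟩
    · simp only [mem_product, mem_Ico, mem_singleton] at hx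
      obtain ⟨⟨hpa, ha⟩, rfl⟩ := hx
      simp only [tileP, hpa, ite_true]
    · simp only [mem_product, mem_Ico, mem_singleton] at hx
      obtain ⟨rfl, hb⟩ := hx
      have : ¬ x.2 ≤ x.1 := by omega
      simp only [tileP, this, ite_false]
  | succ c ih =>
    have h2 : (2:ℕ) ^ (c + i + 1) = 2 ^ (c + i) + 2 ^ (c + i) := by ring
    simp only [BBA, mem_union, mem_image, mem_range] at hR
    rcases hR with ((hR | ⟨R', hR', rfl⟩) | ⟨j, hj, rfl⟩) | ⟨j, hj, rfl⟩
    · have hxV := BBA_subset R hR hx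
      rw [mem_Vk] at hxV
      simp only [tileP, hxV.1, hxV.2, ite_true]
      exact ih hR hx
    · simp only [shiftTile, mem_image] at hx
      obtain ⟨q, hq, rfl⟩ := hx
      have hqV := BBA_subset R' hR' hq
      rw [mem_Vk] at hqV
      have c1 : ¬ (q.1 + 2 ^ (c + i), q.2 + 2 ^ (c + i)).1 < 2 ^ (c + i) := by simp
      have c2 : ¬ (q.1 + 2 ^ (c + i), q.2 + 2 ^ (c + i)).2 < 2 ^ (c + i) := by simp
      simp only [tileP, c1, c2, ite_false]
      have hsub : ((q.1 + 2 ^ (c + i), q.2 + 2 ^ (c + i)).1 - 2 ^ (c + i),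
          (q.1 + 2 ^ (c + i), q.2 + 2 ^ (c + i)).2 - 2 ^ (c + i)) = q := by
        simp
      rw [hsub, ← shiftTile_prod, ← ih hR' hq]
    · simp only [mem_product, mem_Ico, mem_singleton] at hx
      obtain ⟨⟨ha1, ha2⟩, rfl⟩ := hx
      have c1 : ¬ x.1 < 2 ^ (c + i) := by omega
      have c2 : x.2 < 2 ^ (c + i) := hj
      simp only [tileP, c1, c2, ite_true, ite_false]
    · simp only [mem_product, mem_Ico, mem_singleton] at hx
      obtain ⟨rfl, hb1, hb2⟩ := hx
      have c1 : x.1 < 2 ^ (c + i) := hj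
      have c2 : ¬ x.2 < 2 ^ (c + i) := by omega
      simp only [tileP, c1, c2, ite_true, ite_false]

lemma tileOf_BBA {c i : ℕ} {x : ℕ × ℕ} (hx : x ∈ Vk (c + i)) :
    tileOf (BBA c i) x = (tileP c i x).1 ×ˢ (tileP c i x).2 := by
  have hfilter : (BBA c i).filter (fun R => x ∈ R) =
      {(tileP c i x).1 ×ˢ (tileP c i x).2} := by
    ext R
    simp only [mem_filter, mem_singleton]
    constructor
    · rintro ⟨hR, hxR⟩; exact BBA_eq_tileP hR hxR
    · rintro rfl
      exact ⟨tileP_mem_BBA hx, mem_product.2 (tileP_self hx)⟩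
  rw [tileOf, hfilter, sup_singleton, id]

lemma rowfilter {c i : ℕ} {x : ℕ × ℕ} (hx : x ∈ Vk (c + i)) :
    (Finset.range (2 ^ (c + i))).filter (fun y => (x.1, y) ∈ tileOf (BBA c i) x) =
      (tileP c i x).2 := by
  rw [tileOf_BBA hx]
  ext y
  simp only [mem_filter, mem_range, mem_product]
  constructor
  · rintro ⟨-, -, h⟩; exact h
  · intro hy
    have hx1 : x.1 ∈ (tileP c i x).1 := (tileP_self hx).1
    have hsub := BBA_subset _ (tileP_mem_BBA hx)
    have hmem := hsub (show (x.1, y) ∈ _ from mem_product.2 ⟨hx1, hy⟩)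
    rw [mem_Vk] at hmem
    exact ⟨hmem.2, hx1, hy⟩

def Dfun : ℕ → ℕ → ℕ × ℕ → ℕ
  | 0, i, x => if x.2 ≤ x.1 then 1 else 2 ^ i - 1 - x.1
  | c + 1, i, x =>
    if x.1 < 2 ^ (c + i) then
      if x.2 < 2 ^ (c + i) then Dfun c i x else 2 ^ (c + i)
    else
      if x.2 < 2 ^ (c + i) then 1 else Dfun c i (x.1 - 2 ^ (c + i), x.2 - 2 ^ (c + i))

lemma tileP_card (c i : ℕ) (x : ℕ × ℕ) : (tileP c i x).2.card = Dfun c i x := by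
  induction c generalizing x with
  | zero =>
    by_cases h : x.2 ≤ x.1 <;>
      simp only [tileP, Dfun, h, ite_true, ite_false, card_singleton, Nat.card_Ico] <;>
      omega
  | succ c ih =>
    have h2 : (2:ℕ) ^ (c + i + 1) = 2 ^ (c + i) + 2 ^ (c + i) := by ring
    by_cases h1 : x.1 < 2 ^ (c + i) <;> by_cases hq : x.2 < 2 ^ (c + i) <;>
      simp only [tileP, Dfun, h1, hq, ite_true, ite_false, card_singleton, Nat.card_Ico]
    · exact ih x
    · omega
    · rw [Finset.card_image_of_injective _ (add_left_injective _)]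
      exact ih _

lemma Dfun_pos {c i : ℕ} {x : ℕ × ℕ} (hx : x ∈ Vk (c + i)) : 0 < Dfun c i x := by
  induction c generalizing x with
  | zero =>
    rw [mem_Vk] at hx
    simp only [Nat.zero_add] at hx
    by_cases h : x.2 ≤ x.1 <;> simp only [Dfun, h, ite_true, ite_false] <;> omega
  | succ c ih =>
    rw [show c + 1 + i = c + i + 1 from by omega, mem_Vk] at hx
    have h2 : (2:ℕ) ^ (c + i + 1) = 2 ^ (c + i) + 2 ^ (c + i) := by ring
    by_cases h1 : x.1 < 2 ^ (c + i) <;> by_cases hq : x.2 < 2 ^ (c + i) <;>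
      simp only [Dfun, h1, hq, ite_true, ite_false]
    · exact ih (mem_Vk.2 ⟨h1, hq⟩)
    · positivity
    · omega
    · exact ih (mem_Vk.2 ⟨by simp; omega, by simp; omega⟩)

def Nfun (k : ℕ) (x : ℕ × ℕ) : ℕ := if x.2 ≤ x.1 then 1 else 2 ^ k - 1 - x.1

lemma Nlem {k : ℕ} {x : ℕ × ℕ} (hx : x ∈ Vk k) :
    ((Finset.range (2 ^ k)).filter fun y => Auc (x.1, y) = Auc x).card = Nfun k x := by
  rw [mem_Vk] at hx
  by_cases h : x.2 ≤ x.1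
  · have he : ((Finset.range (2 ^ k)).filter fun y => Auc (x.1, y) = Auc x) = {x.2} := by
      ext y
      simp only [mem_filter, mem_range, mem_singleton, Auc, h, ite_true]
      constructor
      · rintro ⟨hy, hAuc⟩
        split at hAuc <;> simp only [Prod.mk.injEq] at hAuc <;> omega
      · rintro rfl
        exact ⟨by omega, by simp [h]⟩
    rw [he, card_singleton, Nfun, if_pos h]
  · have he : ((Finset.range (2 ^ k)).filter fun y => Auc (x.1, y) = Auc x) =
        Finset.Ico (x.1 + 1) (2 ^ k) := by
      ext y
      simp only [mem_filter, mem_range, mem_Ico, Auc, h, ite_false]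
      constructor
      · rintro ⟨hy, hAuc⟩
        split at hAuc <;> simp only [Prod.mk.injEq] at hAuc <;> omega
      · intro hy
        refine ⟨hy.2, ?_⟩
        rw [if_neg (by omega)]
    rw [he, Nat.card_Ico, Nfun, if_neg h]
    omega

def Fsum (c i : ℕ) : ℚ :=
  ∑ x ∈ Vk (c + i), (Nfun (c + i) x : ℚ) / (Dfun c i x : ℚ)

def Gsum (c i : ℕ) : ℚ :=
  ∑ x ∈ Vk (c + i), if x.1 < x.2 then 1 / (Dfun c i x : ℚ) else 0

lemma fst_mk' (u v : ℕ) : (u, v).1 = u := rfl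
lemma snd_mk' (u v : ℕ) : (u, v).2 = v := rfl

lemma sum_Vk_succ (k : ℕ) (f : ℕ × ℕ → ℚ) :
    ∑ x ∈ Vk (k + 1), f x =
      (((∑ a ∈ range (2 ^ k), ∑ b ∈ range (2 ^ k), f (a, b)) +
        ∑ a ∈ range (2 ^ k), ∑ b ∈ range (2 ^ k), f (a, 2 ^ k + b)) +
      ((∑ a ∈ range (2 ^ k), ∑ b ∈ range (2 ^ k), f (2 ^ k + a, b)) +
        ∑ a ∈ range (2 ^ k), ∑ b ∈ range (2 ^ k), f (2 ^ k + a, 2 ^ k + b))) := by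
  rw [Vk, Finset.sum_product, show (2:ℕ) ^ (k + 1) = 2 ^ k + 2 ^ k from by ring,
    Finset.sum_range_add]
  simp only [Finset.sum_range_add]
  rw [Finset.sum_add_distrib, Finset.sum_add_distrib]

lemma gauss (n : ℕ) : ∑ a ∈ range n, (a : ℚ) = n * (n - 1) / 2 := by
  induction n with
  | zero => simp
  | succ n ih => rw [Finset.sum_range_succ, ih]; push_cast; ring

lemma Fsum_zero (i : ℕ) : Fsum 0 i = 2 ^ (2 * i) := by
  have h1 : ∀ x ∈ Vk (0 + i), (Nfun (0 + i) x : ℚ) / (Dfun 0 i x : ℚ) = 1 := by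
    intro x hx
    rw [mem_Vk] at hx
    simp only [Nat.zero_add] at hx ⊢
    by_cases h : x.2 ≤ x.1
    · simp [Nfun, Dfun, h]
    · simp only [Nfun, Dfun, h, ite_false]
      rw [div_self]
      exact Nat.cast_ne_zero.2 (by omega)
  rw [Fsum, Finset.sum_congr rfl h1, Finset.sum_const, Vk, card_product, card_range,
    Nat.zero_add]
  push_cast
  ring

lemma Gsum_zero (i : ℕ) : Gsum 0 i = 2 ^ i - 1 := by
  have h1 : ∀ x ∈ Vk (0 + i),
      (if x.1 < x.2 then 1 / (Dfun 0 i x : ℚ) else 0) =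
        if x.1 < x.2 then 1 / ((2 ^ i - 1 - x.1 : ℕ) : ℚ) else 0 := by
    intro x hx
    by_cases h : x.1 < x.2
    · rw [if_pos h, if_pos h]
      congr 2
      simp [Dfun, show ¬ x.2 ≤ x.1 from by omega]
    · rw [if_neg h, if_neg h]
  rw [Gsum, Finset.sum_congr rfl h1, Vk, Nat.zero_add, Finset.sum_product]
  simp only [fst_mk', snd_mk']
  have h2 : ∀ a ∈ range (2 ^ i),
      (∑ b ∈ range (2 ^ i), if a < b then 1 / ((2 ^ i - 1 - a : ℕ) : ℚ) else 0)
        = if a + 1 < 2 ^ i then 1 else 0 := by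
    intro a ha
    rw [mem_range] at ha
    have hf : Finset.filter (fun b => a < b) (range (2 ^ i)) =
        Finset.Ico (a + 1) (2 ^ i) := by
      ext b; simp only [mem_filter, mem_range, mem_Ico]; omega
    rw [← Finset.sum_filter, hf, Finset.sum_const, Nat.card_Ico, nsmul_eq_mul]
    by_cases h : a + 1 < 2 ^ i
    · rw [if_pos h, mul_one_div, show 2 ^ i - (a + 1) = 2 ^ i - 1 - a from by omega,
        div_self (Nat.cast_ne_zero.2 (by omega : (2:ℕ) ^ i - 1 - a ≠ 0))]
    · rw [if_neg h, show 2 ^ i - (a + 1) = 0 from by omega]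
      simp
  rw [Finset.sum_congr rfl h2, ← Finset.sum_filter,
    show Finset.filter (fun a => a + 1 < 2 ^ i) (range (2 ^ i)) = range (2 ^ i - 1) from by
      ext a; simp only [mem_filter, mem_range]; omega,
    Finset.sum_const, card_range, nsmul_eq_mul, mul_one]
  have : (1:ℕ) ≤ 2 ^ i := Nat.one_le_two_pow
  push_cast [this]
  ring

lemma Gsum_double (c i : ℕ) : Gsum c i =
    ∑ a ∈ range (2 ^ (c + i)), ∑ b ∈ range (2 ^ (c + i)),
      (if a < b then 1 / (Dfun c i (a, b) : ℚ) else 0) := by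
  rw [Gsum, Vk, Finset.sum_product]

lemma Fsum_double (c i : ℕ) : Fsum c i =
    ∑ a ∈ range (2 ^ (c + i)), ∑ b ∈ range (2 ^ (c + i)),
      (Nfun (c + i) (a, b) : ℚ) / (Dfun c i (a, b) : ℚ) := by
  rw [Fsum, Vk, Finset.sum_product]

lemma Dfun_LL {c i a b : ℕ} (ha : a < 2 ^ (c + i)) (hb : b < 2 ^ (c + i)) :
    Dfun (c + 1) i (a, b) = Dfun c i (a, b) := by
  simp [Dfun, ha, hb]

lemma Dfun_CS {c i a b : ℕ} (ha : a < 2 ^ (c + i)) :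
    Dfun (c + 1) i (a, 2 ^ (c + i) + b) = 2 ^ (c + i) := by
  simp [Dfun, ha, show ¬ (2 ^ (c + i) + b < 2 ^ (c + i)) from by omega]

lemma Dfun_RS {c i a b : ℕ} (hb : b < 2 ^ (c + i)) :
    Dfun (c + 1) i (2 ^ (c + i) + a, b) = 1 := by
  simp [Dfun, hb, show ¬ (2 ^ (c + i) + a < 2 ^ (c + i)) from by omega]

lemma Dfun_UR {c i a b : ℕ} :
    Dfun (c + 1) i (2 ^ (c + i) + a, 2 ^ (c + i) + b) = Dfun c i (a, b) := by
  simp [Dfun, show ¬ (2 ^ (c + i) + a < 2 ^ (c + i)) from by omega,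
    show ¬ (2 ^ (c + i) + b < 2 ^ (c + i)) from by omega]

lemma Gsum_succ (c i : ℕ) : Gsum (c + 1) i = 2 * Gsum c i + 2 ^ (c + i) := by
  have h2 : (2:ℕ) ^ (c + i + 1) = 2 ^ (c + i) + 2 ^ (c + i) := by ring
  have hA : (∑ a ∈ range (2 ^ (c + i)), ∑ b ∈ range (2 ^ (c + i)),
      (if a < b then 1 / (Dfun (c + 1) i (a, b) : ℚ) else 0)) = Gsum c i := by
    rw [Gsum_double]
    refine Finset.sum_congr rfl fun a ha => Finset.sum_congr rfl fun b hb => ?_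
    rw [mem_range] at ha hb
    rw [Dfun_LL ha hb]
  have hB : (∑ a ∈ range (2 ^ (c + i)), ∑ b ∈ range (2 ^ (c + i)),
      (if a < 2 ^ (c + i) + b then 1 / (Dfun (c + 1) i (a, 2 ^ (c + i) + b) : ℚ) else 0))
        = 2 ^ (c + i) := by
    have hp : ∀ a ∈ range (2 ^ (c + i)), ∀ b ∈ range (2 ^ (c + i)),
        (if a < 2 ^ (c + i) + b then 1 / (Dfun (c + 1) i (a, 2 ^ (c + i) + b) : ℚ) else 0)
          = 1 / ((2:ℚ) ^ (c + i)) := by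
      intro a ha b hb
      rw [mem_range] at ha hb
      rw [if_pos (by omega), Dfun_CS ha]
      norm_cast
    rw [Finset.sum_congr rfl (fun a ha => Finset.sum_congr rfl (hp a ha))]
    simp only [Finset.sum_const, card_range, nsmul_eq_mul]
    push_cast
    have h0 : ((2:ℚ) ^ (c + i)) ≠ 0 := by positivity
    field_simp
  have hC : (∑ a ∈ range (2 ^ (c + i)), ∑ b ∈ range (2 ^ (c + i)),
      (if 2 ^ (c + i) + a < b then 1 / (Dfun (c + 1) i (2 ^ (c + i) + a, b) : ℚ) else 0))
        = 0 := by
    have hp : ∀ a ∈ range (2 ^ (c + i)), ∀ b ∈ range (2 ^ (c + i)),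
        (if 2 ^ (c + i) + a < b then 1 / (Dfun (c + 1) i (2 ^ (c + i) + a, b) : ℚ) else 0)
          = 0 := by
      intro a ha b hb
      rw [mem_range] at ha hb
      rw [if_neg (by omega)]
    rw [Finset.sum_congr rfl (fun a ha => Finset.sum_congr rfl (hp a ha))]
    simp
  have hD : (∑ a ∈ range (2 ^ (c + i)), ∑ b ∈ range (2 ^ (c + i)),
      (if 2 ^ (c + i) + a < 2 ^ (c + i) + b then
        1 / (Dfun (c + 1) i (2 ^ (c + i) + a, 2 ^ (c + i) + b) : ℚ) else 0)) = Gsum c i := by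
    rw [Gsum_double]
    refine Finset.sum_congr rfl fun a ha => Finset.sum_congr rfl fun b hb => ?_
    rw [Dfun_UR]
    congr 1
    simp
  rw [Gsum, show c + 1 + i = c + i + 1 from by omega, sum_Vk_succ]
  simp only [fst_mk', snd_mk']
  rw [hA, hB, hC, hD]
  ring

lemma Nfun_A {k a b : ℕ} (ha : a < 2 ^ k) (hab : ¬ b ≤ a) :
    (Nfun (k + 1) (a, b) : ℚ) = (Nfun k (a, b) : ℚ) + 2 ^ k := by
  have h2 : (2:ℕ) ^ (k + 1) = 2 ^ k + 2 ^ k := by ring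
  have hn : Nfun (k + 1) (a, b) = Nfun k (a, b) + 2 ^ k := by
    simp only [Nfun, fst_mk', snd_mk', if_neg hab]
    omega
  rw [hn]
  push_cast
  ring

lemma Fsum_succ (c i : ℕ) : Fsum (c + 1) i = 2 * Fsum c i + 2 ^ (c + i) * Gsum c i
    + 2 ^ (2 * (c + i)) + (3 * 2 ^ (2 * (c + i)) / 2 - 2 ^ (c + i) / 2) := by
  have h2 : (2:ℕ) ^ (c + i + 1) = 2 ^ (c + i) + 2 ^ (c + i) := by ring
  have hA : (∑ a ∈ range (2 ^ (c + i)), ∑ b ∈ range (2 ^ (c + i)),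
      (Nfun (c + i + 1) (a, b) : ℚ) / (Dfun (c + 1) i (a, b) : ℚ))
        = Fsum c i + 2 ^ (c + i) * Gsum c i := by
    rw [Fsum_double, Gsum_double, Finset.mul_sum]
    simp only [Finset.mul_sum, mul_ite, mul_zero]
    rw [← Finset.sum_add_distrib]
    refine Finset.sum_congr rfl fun a ha => ?_
    rw [← Finset.sum_add_distrib]
    refine Finset.sum_congr rfl fun b hb => ?_
    rw [mem_range] at ha hb
    rw [Dfun_LL ha hb]
    by_cases hab : b ≤ a
    · have e1 : Nfun (c + i + 1) (a, b) = 1 := by simp [Nfun, hab]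
      have e2 : Nfun (c + i) (a, b) = 1 := by simp [Nfun, hab]
      rw [e1, e2, if_neg (by omega)]
      ring
    · rw [Nfun_A ha hab, if_pos (by omega), add_div]
      ring
  have hB : (∑ a ∈ range (2 ^ (c + i)), ∑ b ∈ range (2 ^ (c + i)),
      (Nfun (c + i + 1) (a, 2 ^ (c + i) + b) : ℚ) /
        (Dfun (c + 1) i (a, 2 ^ (c + i) + b) : ℚ))
        = 3 * 2 ^ (2 * (c + i)) / 2 - 2 ^ (c + i) / 2 := by
    have hp : ∀ a ∈ range (2 ^ (c + i)), ∀ b ∈ range (2 ^ (c + i)),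
        (Nfun (c + i + 1) (a, 2 ^ (c + i) + b) : ℚ) /
          (Dfun (c + 1) i (a, 2 ^ (c + i) + b) : ℚ)
          = (2 * 2 ^ (c + i) - 1 - a) / 2 ^ (c + i) := by
      intro a ha b hb
      rw [mem_range] at ha hb
      have hn : (Nfun (c + i + 1) (a, 2 ^ (c + i) + b) : ℚ) = 2 * 2 ^ (c + i) - 1 - a := by
        simp only [Nfun, fst_mk', snd_mk',
          if_neg (show ¬ 2 ^ (c + i) + b ≤ a from by omega)]
        rw [Nat.cast_sub (show a ≤ 2 ^ (c + i + 1) - 1 from by omega),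
          Nat.cast_sub (show 1 ≤ 2 ^ (c + i + 1) from Nat.one_le_two_pow)]
        push_cast
        ring
      rw [hn, Dfun_CS ha]
      norm_cast
    rw [Finset.sum_congr rfl (fun a ha => Finset.sum_congr rfl (hp a ha))]
    simp only [Finset.sum_const, card_range, nsmul_eq_mul]
    have h0 : ((2:ℚ) ^ (c + i)) ≠ 0 := by positivity
    have hq : ∀ a ∈ range (2 ^ (c + i)), ((2 ^ (c + i) : ℕ) : ℚ) *
        ((2 * 2 ^ (c + i) - 1 - (a:ℚ)) / 2 ^ (c + i)) = (2 * 2 ^ (c + i) - 1) - (a:ℚ) := by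
      intro a _
      push_cast
      field_simp
    rw [Finset.sum_congr rfl hq, Finset.sum_sub_distrib, Finset.sum_const, card_range,
      nsmul_eq_mul, gauss]
    push_cast
    field_simp
    ring
  have hC : (∑ a ∈ range (2 ^ (c + i)), ∑ b ∈ range (2 ^ (c + i)),
      (Nfun (c + i + 1) (2 ^ (c + i) + a, b) : ℚ) /
        (Dfun (c + 1) i (2 ^ (c + i) + a, b) : ℚ)) = 2 ^ (2 * (c + i)) := by
    have hp : ∀ a ∈ range (2 ^ (c + i)), ∀ b ∈ range (2 ^ (c + i)),
        (Nfun (c + i + 1) (2 ^ (c + i) + a, b) : ℚ) /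
          (Dfun (c + 1) i (2 ^ (c + i) + a, b) : ℚ) = 1 := by
      intro a ha b hb
      rw [mem_range] at ha hb
      have hn : Nfun (c + i + 1) (2 ^ (c + i) + a, b) = 1 := by
        simp [Nfun, show b ≤ 2 ^ (c + i) + a from by omega]
      rw [hn, Dfun_RS hb]
      norm_num
    rw [Finset.sum_congr rfl (fun a ha => Finset.sum_congr rfl (hp a ha))]
    simp only [Finset.sum_const, card_range, nsmul_eq_mul, mul_one]
    push_cast
    ring
  have hD : (∑ a ∈ range (2 ^ (c + i)), ∑ b ∈ range (2 ^ (c + i)),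
      (Nfun (c + i + 1) (2 ^ (c + i) + a, 2 ^ (c + i) + b) : ℚ) /
        (Dfun (c + 1) i (2 ^ (c + i) + a, 2 ^ (c + i) + b) : ℚ)) = Fsum c i := by
    rw [Fsum_double]
    refine Finset.sum_congr rfl fun a ha => Finset.sum_congr rfl fun b hb => ?_
    rw [Dfun_UR]
    have hn : Nfun (c + i + 1) (2 ^ (c + i) + a, 2 ^ (c + i) + b) = Nfun (c + i) (a, b) := by
      simp only [Nfun, fst_mk', snd_mk']
      by_cases hba : b ≤ a
      · rw [if_pos (by omega), if_pos hba]
      · rw [if_neg (by omega), if_neg hba]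
        omega
    rw [hn]
  rw [Fsum, show c + 1 + i = c + i + 1 from by omega, sum_Vk_succ]
  rw [hA, hB, hC, hD]
  ring

lemma Gsum_eq (c i : ℕ) : Gsum c i = 2 ^ c * (2 ^ i - 1) + c * 2 ^ (c + i) / 2 := by
  induction c with
  | zero => rw [Gsum_zero]; push_cast; ring
  | succ c ih => rw [Gsum_succ, ih]; push_cast; ring

lemma Fsum_eq (c i : ℕ) : Fsum c i =
    ((c : ℚ) + 5) / 4 * 2 ^ (2 * (c + i)) + (2 - (c : ℚ)) / 4 * 2 ^ (c + i)
      - 2 ^ (2 * (c + i)) / 2 ^ (i + 1) - 2 ^ (2 * (c + i)) / 2 ^ (c + 2) := by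
  have h1 : ((2:ℚ) ^ (i + 1)) ≠ 0 := by positivity
  induction c with
  | zero =>
    rw [Fsum_zero]
    field_simp
    ring
  | succ c ih =>
    have h2 : ((2:ℚ) ^ (c + 2)) ≠ 0 := by positivity
    have h3 : ((2:ℚ) ^ (c + 1 + 2)) ≠ 0 := by positivity
    rw [Fsum_succ, ih, Gsum_eq]
    push_cast
    field_simp
    ring


/-- with `k = c + i`, the average-case PAR with respect to
party 1 of `T_{c,i}` for `A_k` equals
`(c+5)/4 + (2−c)/2^{k+2} − 1/2^{i+1} − 1/2^{c+2}`. -/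
theorem stmt14 (c i : ℕ) :
    avgPAR1 (c + i) Auc (BBA c i) =
      ((c : ℚ) + 5) / 4 + ((2 : ℚ) - c) / 2 ^ (c + i + 2) - 1 / 2 ^ (i + 1) -
        1 / 2 ^ (c + 2) := by
  have key : avgPAR1 (c + i) Auc (BBA c i) = Fsum c i / 2 ^ (2 * (c + i)) := by
    rw [avgPAR1, Fsum]
    congr 1
    refine Finset.sum_congr rfl fun x hx => ?_
    rw [Nlem hx, rowfilter hx, tileP_card]
  rw [key, Fsum_eq]
  have h1 : ((2:ℚ) ^ (i + 1)) ≠ 0 := by positivity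
  have h2 : ((2:ℚ) ^ (c + 2)) ≠ 0 := by positivity
  have h3 : ((2:ℚ) ^ (2 * (c + i))) ≠ 0 := by positivity
  have h4 : ((2:ℚ) ^ (c + i + 2)) ≠ 0 := by positivity
  field_simp
  ring
end
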